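/- arXiv:2601.00155 — 13 statements merged into one kernel-verified Lean document; each statement's English description precedes it below -/
import Mathlib

section
/- Let ((T_j, Y_j))_{j≥1} be an i.i.d. sequence of pairs of random variables such that each T_j is strictly positive, each Y_j is nonnegative, 0 < E[T₁] < ∞, and E[Y₁] < ∞. Set τ₀ := 0, τ_n := T₁ + ... + T_n, and N(t) := max{n ≥ 0 : τ_n ≤ t}. Then, almost surely, Y_{N(t)+1}/t converges to 0 as t → ∞. -/
open MeasureTheory ProbabilityTheory Filter Topology

/-- The renewal counting process: `renewalCount T t ω` is the largest `n` such that the `n`-th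
renewal time `τ_n = T 1 + ... + T n` (here indexed from `0`) is at most `t`. -/
noncomputable def renewalCount {Ω : Type*} (T : ℕ → Ω → ℝ) (t : ℝ) (ω : Ω) : ℕ :=
  sSup {n : ℕ | ∑ j ∈ Finset.range n, T j ω ≤ t}

/-- Pointwise deterministic core of the argument. -/
lemma renewal_aux (T Y : ℕ → ℝ) (μ : ℝ) (hμ : 0 < μ)
    (hτ : Tendsto (fun n : ℕ => (∑ j ∈ Finset.range n, T j) / n) atTop (𝓝 μ))
    (hY : Tendsto (fun n : ℕ => Y n / n) atTop (𝓝 0))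
    (hYnn : ∀ j, 0 ≤ Y j) :
    Tendsto (fun t : ℝ => Y (sSup {n : ℕ | ∑ j ∈ Finset.range n, T j ≤ t}) / t)
      atTop (𝓝 0) := by
  set τ : ℕ → ℝ := fun n => ∑ j ∈ Finset.range n, T j with hτdef
  -- eventual linear growth of τ
  have hgrow : ∀ᶠ n : ℕ in atTop, (μ / 2) * n ≤ τ n := by
    have h1 : ∀ᶠ n : ℕ in atTop, μ / 2 < τ n / n :=
      hτ.eventually (eventually_gt_nhds (by linarith))
    filter_upwards [h1, eventually_ge_atTop 1] with n hn hn1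
    have hnpos : (0 : ℝ) < n := by exact_mod_cast hn1
    exact (le_div_iff₀ hnpos).mp hn.le
  obtain ⟨n₂, hn₂⟩ := eventually_atTop.mp hgrow
  -- boundedness of the level sets
  have hbdd : ∀ t : ℝ, BddAbove {n : ℕ | τ n ≤ t} := by
    intro t
    refine ⟨max n₂ (⌊2 * t / μ⌋₊ + 1), fun n hn => ?_⟩
    by_contra hc
    push_neg at hc
    have hn2 : n₂ ≤ n := le_of_lt (lt_of_le_of_lt (le_max_left _ _) hc)
    have hfl : (⌊2 * t / μ⌋₊ + 1 : ℕ) ≤ n := le_of_lt (lt_of_le_of_lt (le_max_right _ _) hc)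
    have h2t : 2 * t / μ < n := lt_of_lt_of_le (Nat.lt_floor_add_one _) (by exact_mod_cast hfl)
    have hτn : (μ / 2) * n ≤ τ n := hn₂ n hn2
    have : t < (μ / 2) * n := by
      have := (div_lt_iff₀ hμ).mp h2t
      linarith
    exact absurd hn (by simp only [Set.mem_setOf_eq]; linarith)
  have hmem : ∀ t : ℝ, 0 ≤ t → sSup {n : ℕ | τ n ≤ t} ∈ {n : ℕ | τ n ≤ t} := by
    intro t ht
    exact Nat.sSup_mem ⟨0, by simp [hτdef, ht]⟩ (hbdd t)
  have hle : ∀ (t : ℝ) (n : ℕ), τ n ≤ t → n ≤ sSup {n : ℕ | τ n ≤ t} := by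
    intro t n hn
    exact le_csSup (hbdd t) hn
  rw [Metric.tendsto_nhds]
  intro ε hε
  -- choose n₁ so that Y n ≤ (ε * μ / 4) * n for n ≥ n₁
  have hY' : ∀ᶠ n : ℕ in atTop, Y n ≤ (ε * μ / 4) * n := by
    have h1 : ∀ᶠ n : ℕ in atTop, Y n / n < ε * μ / 4 :=
      hY.eventually (eventually_lt_nhds (by positivity))
    filter_upwards [h1, eventually_ge_atTop 1] with n hn hn1
    have hnpos : (0 : ℝ) < n := by exact_mod_cast hn1
    have := (div_lt_iff₀ hnpos).mp hn
    linarith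
  obtain ⟨n₁, hn₁⟩ := eventually_atTop.mp hY'
  set n₀ : ℕ := max (max n₁ n₂) 1 with hn₀def
  filter_upwards [eventually_ge_atTop (max (τ n₀) 1)] with t ht
  have hτn₀ : τ n₀ ≤ t := le_trans (le_max_left _ _) ht
  have ht1 : (1 : ℝ) ≤ t := le_trans (le_max_right _ _) ht
  have ht0 : (0 : ℝ) < t := lt_of_lt_of_le one_pos ht1
  set N := sSup {n : ℕ | τ n ≤ t} with hNdef
  have hN₀ : n₀ ≤ N := hle t n₀ hτn₀
  have hNτ : τ N ≤ t := hmem t ht0.le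
  have hN1 : 1 ≤ N := le_trans (le_max_right _ _) hN₀
  have hNn₁ : n₁ ≤ N := le_trans (le_trans (le_max_left _ _) (le_max_left _ _)) hN₀
  have hNn₂ : n₂ ≤ N := le_trans (le_trans (le_max_right _ _) (le_max_left _ _)) hN₀
  have hNpos : (0 : ℝ) < N := by exact_mod_cast hN1
  have hYN : Y N ≤ (ε * μ / 4) * N := hn₁ N hNn₁
  have hτN : (μ / 2) * N ≤ τ N := hn₂ N hNn₂
  have htN : (μ / 2) * N ≤ t := le_trans hτN hNτ
  rw [Real.dist_eq, sub_zero, abs_of_nonneg (div_nonneg (hYnn N) ht0.le)]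
  rw [div_lt_iff₀ ht0]
  calc Y N ≤ (ε * μ / 4) * N := hYN
    _ < ε * t := by nlinarith
  
/-- If the pairs `(T j, Y j)` of cycle lengths and nonnegative cycle rewards are i.i.d., with the
`T j` strictly positive, `0 < E[T 0] < ∞`, and `E[Y 0] < ∞`, then almost surely the reward of the
cycle in progress at time `t` (the `(N(t)+1)`-st cycle, which is `Y (N t)` in our `0`-based
indexing) satisfies `Y_{N(t)+1}/t → 0` as `t → ∞`. -/
theorem renewal_reward_current_cycle_negligible
    {Ω : Type*} [MeasureSpace Ω] [IsProbabilityMeasure (ℙ : Measure Ω)]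
    (T Y : ℕ → Ω → ℝ)
    (hTmeas : ∀ j, Measurable (T j))
    (hYmeas : ∀ j, Measurable (Y j))
    (hindep : iIndepFun (fun j ω => (T j ω, Y j ω)) ℙ)
    (hident : ∀ j, IdentDistrib (fun ω => (T j ω, Y j ω)) (fun ω => (T 0 ω, Y 0 ω)) ℙ ℙ)
    (hTpos : ∀ j, ∀ ω, 0 < T j ω)
    (hYnonneg : ∀ j, ∀ ω, 0 ≤ Y j ω)
    (hTint : Integrable (T 0) ℙ)
    (hTmean : 0 < ∫ ω, T 0 ω ∂ℙ)
    (hYint : Integrable (Y 0) ℙ) :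
    ∀ᵐ ω ∂ℙ, Tendsto (fun t : ℝ => Y (renewalCount T t ω) ω / t) atTop (nhds 0) := by
  have hT_indep : Pairwise (Function.onFun (IndepFun · · ℙ) T) := fun i j hij =>
    (hindep.indepFun hij).comp measurable_fst measurable_fst
  have hY_indep : Pairwise (Function.onFun (IndepFun · · ℙ) Y) := fun i j hij =>
    (hindep.indepFun hij).comp measurable_snd measurable_snd
  have hT_ident : ∀ j, IdentDistrib (T j) (T 0) ℙ ℙ := fun j => (hident j).comp measurable_fst
  have hY_ident : ∀ j, IdentDistrib (Y j) (Y 0) ℙ ℙ := fun j => (hident j).comp measurable_snd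
  have hA := strong_law_ae_real T hTint hT_indep hT_ident
  have hB := strong_law_ae_real Y hYint hY_indep hY_ident
  filter_upwards [hA, hB] with ω hτ hS
  -- derive Y n ω / n → 0
  have hY0 : Tendsto (fun n : ℕ => Y n ω / n) atTop (𝓝 0) := by
    set L := ℙ[Y 0] with hL
    set S : ℕ → ℝ := fun n => ∑ i ∈ Finset.range n, Y i ω with hSdef
    have h1 : Tendsto (fun n : ℕ => S (n + 1) / ((n : ℝ) + 1)) atTop (𝓝 L) := by
      have := hS.comp (tendsto_add_atTop_nat 1)
      refine this.congr fun n => ?_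
      simp only [Function.comp_apply, hSdef]
      push_cast
      ring
    have h2 : Tendsto (fun n : ℕ => ((n : ℝ) + 1) / n) atTop (𝓝 1) := by
      have : Tendsto (fun n : ℕ => 1 + (n : ℝ)⁻¹) atTop (𝓝 (1 + 0)) :=
        tendsto_const_nhds.add (tendsto_inv_atTop_zero.comp tendsto_natCast_atTop_atTop)
      apply this.congr' ?_ |>.mono_right (by norm_num)
      filter_upwards [eventually_ge_atTop 1] with n hn
      have hn0 : (n : ℝ) ≠ 0 := by positivity
      field_simp
    have h4 := (h2.mul h1).sub hS
    have : (1 : ℝ) * L - L = 0 := by ring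
    rw [this] at h4
    refine Tendsto.congr' ?_ h4
    filter_upwards [eventually_ge_atTop 1] with n hn
    have hn0 : (n : ℝ) ≠ 0 := by positivity
    have hn10 : (n : ℝ) + 1 ≠ 0 := by positivity
    have hstep : S (n + 1) = S n + Y n ω := Finset.sum_range_succ _ _
    field_simp [hstep]
    rw [hstep]
    simp only [hSdef]
    ring
  have key := renewal_aux (fun j => T j ω) (fun j => Y j ω) _ hTmean hτ hY0 (fun j => hYnonneg j ω)
  simpa [renewalCount] using key
end

section
/- Let λ, μ, v, c > 0, ρ := λ/μ, and for an integer K ≥ 0 define S_K := Σ_{j=0}^K ρ^j and p_k^K := ρ^k / S_K for 0 ≤ k ≤ K. Let K_FCFS := ⌊μ v / c⌋. Then for every integer K > K_FCFS, Σ_{k=0}^{K} p_k^K (μ v − c k) < Σ_{k=0}^{K_FCFS} p_k^{K_FCFS} (μ v − c k). Consequently, any maximizer K* of K ↦ Σ_{k=0}^{K} p_k^K (μ v − c k) over nonnegative integers satisfies K* ≤ K_FCFS. -/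
/-- **Naor's excessive-queueing theorem.** In an M/M/1 queue with buyer-arrival rate `lam`,
item-arrival rate `mu`, value `v` and waiting cost `c`, let `p k K = ρ^k / ∑_{j≤K} ρ^j` be the
stationary queue-length distribution under cap `K` and
`W K = ∑_{k=0}^K p k K * (μv − ck)` the steady-state welfare. With
`K_FCFS = ⌊μv/c⌋` the FCFS equilibrium cap: welfare under any cap `K > K_FCFS` is strictly
below welfare under `K_FCFS`, and consequently any welfare-maximizing cap `K*` satisfies
`K* ≤ K_FCFS`. -/
theorem naor_excessive_queueing (lam mu v c : ℝ)
    (hlam : 0 < lam) (hmu : 0 < mu) (hv : 0 < v) (hc : 0 < c) :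
    let ρ := lam / mu
    let p : ℕ → ℕ → ℝ := fun k K => ρ ^ k / ∑ j ∈ Finset.range (K + 1), ρ ^ j
    let W : ℕ → ℝ := fun K => ∑ k ∈ Finset.range (K + 1), p k K * (mu * v - c * k)
    let KF : ℕ := ⌊mu * v / c⌋₊
    (∀ K : ℕ, KF < K → W K < W KF) ∧
    (∀ Kstar : ℕ, (∀ K : ℕ, W K ≤ W Kstar) → Kstar ≤ KF) := by
  intro ρ p W KF
  have hρ : 0 < ρ := div_pos hlam hmu
  have hS : ∀ K : ℕ, 0 < ∑ j ∈ Finset.range (K + 1), ρ ^ j := fun K =>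
    Finset.sum_pos (fun j _ => pow_pos hρ j) ⟨0, Finset.mem_range.2 (Nat.succ_pos K)⟩
  have hW : ∀ K : ℕ, W K = (∑ k ∈ Finset.range (K + 1), ρ ^ k * (mu * v - c * k)) /
      (∑ j ∈ Finset.range (K + 1), ρ ^ j) := by
    intro K
    simp only [W, p]
    rw [Finset.sum_div]
    exact Finset.sum_congr rfl fun k _ => by ring
  have key : StrictAnti W := by
    apply strictAnti_nat_of_succ_lt
    intro K
    rw [hW, hW, div_lt_div_iff₀ (hS _) (hS _)]
    have e1 : ∑ k ∈ Finset.range (K + 1 + 1), ρ ^ k * (mu * v - c * k)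
        = (∑ k ∈ Finset.range (K + 1), ρ ^ k * (mu * v - c * k))
          + ρ ^ (K + 1) * (mu * v - c * (K + 1)) := by
      rw [Finset.sum_range_succ]; push_cast; ring
    have e2 : ∑ j ∈ Finset.range (K + 1 + 1), ρ ^ j
        = (∑ j ∈ Finset.range (K + 1), ρ ^ j) + ρ ^ (K + 1) :=
      Finset.sum_range_succ _ _
    rw [e1, e2]
    set S := ∑ j ∈ Finset.range (K + 1), ρ ^ j with hSdef
    set A := ∑ k ∈ Finset.range (K + 1), ρ ^ k * (mu * v - c * k) with hAdef
    have hmain : (mu * v - c * (K + 1)) * S < A := by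
      rw [hSdef, hAdef, Finset.mul_sum]
      apply Finset.sum_lt_sum_of_nonempty ⟨0, Finset.mem_range.2 (Nat.succ_pos K)⟩
      intro k hk
      have hk' : (k : ℝ) < (K : ℝ) + 1 := by
        exact_mod_cast Nat.lt_succ_iff.mpr (Nat.lt_succ_iff.mp (Finset.mem_range.mp hk))
      have : mu * v - c * (K + 1) < mu * v - c * k := by nlinarith
      calc (mu * v - c * (↑K + 1)) * ρ ^ k = ρ ^ k * (mu * v - c * (K + 1)) := by ring
        _ < ρ ^ k * (mu * v - c * k) := by
            exact (mul_lt_mul_iff_right₀ (pow_pos hρ k)).mpr this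
    have hr : 0 < ρ ^ (K + 1) := pow_pos hρ _
    nlinarith [mul_lt_mul_of_pos_left hmain hr]
  constructor
  · intro K hK
    exact key hK
  · intro Kstar h
    by_contra hlt
    exact absurd (h KF) (not_le.mpr (key (not_le.mp hlt)))
end

section
/- Let λ, μ, v, c > 0, ρ := λ/μ, and for an integer K ≥ 0 define S_K := Σ_{j=0}^K ρ^j, p_k^K := ρ^k / S_K for 0 ≤ k ≤ K, and W(K) := Σ_{k=1}^K p_k^K (μ v − c k) with W(0) := 0. Then for every integer K ≥ 1, W(K) − W(K−1) = (ρ^K / (S_K · S_{K−1})) · (μ v − c · Σ_{j=0}^{K−1} (K − j) ρ^j). -/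
lemma welfare_aux (a s r X cT mv : ℝ) (hs : s ≠ 0) (hsr : s + r ≠ 0)
    (key : s * (mv - X) - a = mv - cT) :
    (a + r * (mv - X)) / (s + r) - a / s = r / ((s + r) * s) * (mv - cT) := by
  rw [div_sub_div _ _ hsr hs, div_mul_eq_mul_div]
  congr 1
  linear_combination r * key

/-- **Welfare increment identity.** In an M/M/1 queue with load factor `ρ = lam/mu`, with
`S K = ∑_{j=0}^K ρ^j`, stationary probabilities `p k K = ρ^k / S K` and steady-state welfare
`W K = ∑_{k=1}^K p k K * (μv − ck)` (so `W 0 = 0`), for every `K ≥ 1`: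
`W K − W (K−1) = (ρ^K / (S K * S (K−1))) * (μv − c ∑_{j=0}^{K−1} (K−j) ρ^j)`. -/
theorem welfare_increment_identity (lam mu v c : ℝ)
    (hlam : 0 < lam) (hmu : 0 < mu) (hv : 0 < v) (hc : 0 < c)
    (K : ℕ) (hK : 1 ≤ K) :
    let ρ := lam / mu
    let S : ℕ → ℝ := fun n => ∑ j ∈ Finset.range (n + 1), ρ ^ j
    let W : ℕ → ℝ := fun n => ∑ k ∈ Finset.Icc 1 n, (ρ ^ k / S n) * (mu * v - c * k)
    W K - W (K - 1) =
      (ρ ^ K / (S K * S (K - 1))) *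
        (mu * v - c * ∑ j ∈ Finset.range K, ((K : ℝ) - (j : ℝ)) * ρ ^ j) := by
  intro ρ S W
  obtain ⟨n, rfl⟩ : ∃ n, K = n + 1 := ⟨K - 1, (Nat.succ_pred_eq_of_pos hK).symm⟩
  have hρ : 0 < ρ := div_pos hlam hmu
  have hS : ∀ m, 0 < S m := fun m =>
    Finset.sum_pos (fun j _ => pow_pos hρ j) ⟨0, Finset.mem_range.2 (Nat.succ_pos m)⟩
  simp only [Nat.add_sub_cancel]
  have hSn : S n ≠ 0 := (hS n).ne'
  have hW : ∀ m, W m = (∑ k ∈ Finset.Icc 1 m, ρ ^ k * (mu * v - c * k)) / S m := by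
    intro m
    simp only [W, Finset.sum_div]
    refine Finset.sum_congr rfl fun k _ => by ring
  rw [hW, hW]
  have hIcc : ∀ f : ℕ → ℝ,
      ∑ k ∈ Finset.Icc 1 n, f k = ∑ j ∈ Finset.range (n + 1), f j - f 0 := by
    intro f
    rw [Finset.sum_range_succ', show Finset.Icc 1 n = Finset.Ico 1 (n + 1) by
      rw [Finset.Ico_add_one_right_eq_Icc], Finset.sum_Ico_eq_sum_range]
    simp [add_comm]
  have hA1 : ∑ k ∈ Finset.Icc 1 (n + 1), ρ ^ k * (mu * v - c * k)
      = (∑ k ∈ Finset.Icc 1 n, ρ ^ k * (mu * v - c * k))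
        + ρ ^ (n + 1) * (mu * v - c * ((n : ℝ) + 1)) := by
    rw [Finset.sum_Icc_succ_top (Nat.succ_le_succ (Nat.zero_le n))]
    push_cast
    ring
  have hS1 : S (n + 1) = S n + ρ ^ (n + 1) := Finset.sum_range_succ _ _
  have key : S n * (mu * v - c * ((n : ℝ) + 1))
      - ∑ k ∈ Finset.Icc 1 n, ρ ^ k * (mu * v - c * k)
      = mu * v - c * ∑ j ∈ Finset.range (n + 1), (((n : ℕ) + 1 : ℕ) - (j : ℝ)) * ρ ^ j := by
    rw [hIcc fun k => ρ ^ k * (mu * v - c * k)]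
    have h2 : S n * (mu * v - c * ((n : ℝ) + 1))
        = ∑ j ∈ Finset.range (n + 1), ρ ^ j * (mu * v - c * ((n : ℝ) + 1)) := by
      simp only [S]; rw [Finset.sum_mul]
    rw [h2, Finset.mul_sum]
    have h3 : ∑ j ∈ Finset.range (n + 1), ρ ^ j * (mu * v - c * ((n : ℝ) + 1))
        - ∑ j ∈ Finset.range (n + 1), ρ ^ j * (mu * v - c * j)
        = - ∑ j ∈ Finset.range (n + 1), c * ((((n : ℕ) + 1 : ℕ) - (j : ℝ)) * ρ ^ j) := by
      rw [← Finset.sum_sub_distrib, ← Finset.sum_neg_distrib]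
      refine Finset.sum_congr rfl fun j _ => by push_cast; ring
    simp only [pow_zero, Nat.cast_zero, mul_zero, sub_zero, one_mul]
    linarith [h3]
  rw [hA1, hS1]
  have := welfare_aux (∑ k ∈ Finset.Icc 1 n, ρ ^ k * (mu * v - c * k)) (S n)
    (ρ ^ (n + 1)) (c * ((n : ℝ) + 1))
    (c * ∑ j ∈ Finset.range (n + 1), (((n : ℕ) + 1 : ℕ) - (j : ℝ)) * ρ ^ j) (mu * v)
    hSn (by rw [← hS1]; exact (hS (n + 1)).ne') key
  push_cast at this ⊢
  convert this using 2 <;> ring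
end

section
/- Let λ, μ, v, c > 0, ρ := λ/μ, and for an integer K ≥ 0 define S_K := Σ_{j=0}^K ρ^j, p_k^K := ρ^k / S_K for 0 ≤ k ≤ K, and W(K) := Σ_{k=1}^K p_k^K (μ v − c k) with W(0) := 0. Then W is strictly quasi-concave as a sequence: for every integer K ≥ 1, if W(K) ≤ W(K−1) then W(K+1) < W(K). -/
/-- **Strict quasi-concavity of steady-state welfare in the queue cap.** In an M/M/1 queue with
load factor `ρ = lam/mu`, with `S K = ∑_{j=0}^K ρ^j`, stationary probabilities
`p k K = ρ^k / S K` and steady-state welfare `W K = ∑_{k=1}^K p k K * (μv − ck)` (so `W 0 = 0`),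
for every `K ≥ 1`: if `W K ≤ W (K−1)` then `W (K+1) < W K`. -/
theorem welfare_strictly_quasiconcave (lam mu v c : ℝ)
    (hlam : 0 < lam) (hmu : 0 < mu) (hv : 0 < v) (hc : 0 < c)
    (K : ℕ) (hK : 1 ≤ K) :
    let ρ := lam / mu
    let S : ℕ → ℝ := fun n => ∑ j ∈ Finset.range (n + 1), ρ ^ j
    let W : ℕ → ℝ := fun n => ∑ k ∈ Finset.Icc 1 n, (ρ ^ k / S n) * (mu * v - c * k)
    W K ≤ W (K - 1) → W (K + 1) < W K := by
  intro ρ S W hle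
  have hρ : 0 < ρ := div_pos hlam hmu
  have hS : ∀ n, 0 < S n := fun n =>
    Finset.sum_pos (fun j _ => pow_pos hρ j) ⟨0, Finset.mem_range.mpr (Nat.succ_pos n)⟩
  set T : ℕ → ℝ := fun n => ∑ k ∈ Finset.Icc 1 n, ρ ^ k * (mu * v - c * k) with hTdef
  have hW : ∀ n, W n = T n / S n := by
    intro n
    simp only [W, T, Finset.sum_div]
    exact Finset.sum_congr rfl fun k _ => by ring
  obtain ⟨m, rfl⟩ : ∃ m, K = m + 1 := ⟨K - 1, (Nat.succ_pred_eq_of_pos hK).symm⟩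
  simp only [Nat.add_sub_cancel] at hle
  rw [hW, hW, div_le_div_iff₀ (hS _) (hS _)] at hle
  rw [hW, hW, div_lt_div_iff₀ (hS _) (hS _)]
  have hT1 : T (m + 1) = T m + ρ ^ (m + 1) * (mu * v - c * (m + 1)) := by
    simpa using Finset.sum_Icc_succ_top (Nat.le_add_left 1 m)
      (fun k : ℕ => ρ ^ k * (mu * v - c * k))
  have hT2 : T (m + 2) = T (m + 1) + ρ ^ (m + 2) * (mu * v - c * (m + 2)) := by
    have := Finset.sum_Icc_succ_top (Nat.le_add_left 1 (m + 1))
      (fun k : ℕ => ρ ^ k * (mu * v - c * k))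
    simpa [add_assoc] using this
  have hS1 : S (m + 1) = S m + ρ ^ (m + 1) := Finset.sum_range_succ _ _
  have hS2 : S (m + 2) = S (m + 1) + ρ ^ (m + 2) := Finset.sum_range_succ _ _
  have hpow1 : 0 < ρ ^ (m + 1) := pow_pos hρ _
  have hpow2 : 0 < ρ ^ (m + 2) := pow_pos hρ _
  -- from the hypothesis: (μv - c(m+1)) * S m ≤ T m
  have key : (mu * v - c * (m + 1)) * S m ≤ T m := by
    rw [hT1, hS1] at hle
    nlinarith [hle, hpow1]
  -- hence (μv - c(m+1)) * S (m+1) ≤ T (m+1)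
  have key2 : (mu * v - c * (m + 1)) * S (m + 1) ≤ T (m + 1) := by
    rw [hT1, hS1]; nlinarith [key, hpow1]
  -- goal
  rw [hT2, hS2]
  have hSlt : (mu * v - c * (m + 2)) * S (m + 1) < T (m + 1) := by
    have : (mu * v - c * (m + 2)) * S (m + 1) < (mu * v - c * (m + 1)) * S (m + 1) := by
      have hS1pos := hS (m + 1)
      nlinarith [hS1pos, hc]
    linarith [key2]
  nlinarith [hSlt, hpow2, hS (m + 1)]
end

section
/- Let λ, μ, v, c > 0, ρ := λ/μ, K ≥ 1 an integer, and S_K := Σ_{j=0}^K ρ^j. Consider the linear system in unknowns (w_1, ..., w_K) ∈ ℝ^K, with the convention w_0 := v: (λ + μ) w_k = μ w_{k−1} + λ w_{k+1} − c for k = 1, ..., K−1, and (λ + μ) w_K = μ w_{K−1} − c. This system has a unique solution, and its last coordinate equals w_K = (1/S_K) · ( v − (c/μ) · Σ_{j=0}^{K−1} (K − j) ρ^j ). -/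
/-- The dynamic-programming (balance) equations for the continuation values `w k` of the first
incumbent under LCFS in an M/M/1 queue with cap `K`, with the convention `w 0 = v`:
`(λ+μ) w k = μ w (k−1) + λ w (k+1) − c` for `k = 1, ..., K−1`, and
`(λ+μ) w K = μ w (K−1) − c`. Only the coordinates `w 1, ..., w K` are meaningful. -/
def LCFSValueSystem (lam mu v c : ℝ) (K : ℕ) (w : ℕ → ℝ) : Prop :=
  w 0 = v ∧
  (∀ k : ℕ, 1 ≤ k → k ≤ K - 1 →
    (lam + mu) * w k = mu * w (k - 1) + lam * w (k + 1) - c) ∧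
  (lam + mu) * w K = mu * w (K - 1) - c

noncomputable def Sg (r : ℝ) (n : ℕ) : ℝ := ∑ i ∈ Finset.range (n + 1), r ^ i
noncomputable def Tg (r : ℝ) (n : ℕ) : ℝ := ∑ i ∈ Finset.range n, ((n : ℝ) - i) * r ^ i

lemma Sg_zero (r : ℝ) : Sg r 0 = 1 := by simp [Sg]
lemma Tg_zero (r : ℝ) : Tg r 0 = 0 := by simp [Tg]
lemma Tg_one (r : ℝ) : Tg r 1 = 1 := by simp [Tg]
lemma Sg_one (r : ℝ) : Sg r 1 = 1 + r := by simp [Sg, Finset.sum_range_succ]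

lemma Sg_succ (r : ℝ) (n : ℕ) : Sg r (n + 1) = Sg r n + r ^ (n + 1) :=
  Finset.sum_range_succ _ _

lemma Sg_shift (r : ℝ) (n : ℕ) : Sg r (n + 1) = 1 + r * Sg r n := by
  rw [Sg, Finset.sum_range_succ', Sg, Finset.mul_sum]
  simp [pow_succ, mul_comm, add_comm]

lemma Tg_succ (r : ℝ) (n : ℕ) : Tg r (n + 1) = Tg r n + Sg r n := by
  have h : ∀ i ∈ Finset.range (n + 1),
      (((n + 1 : ℕ) : ℝ) - i) * r ^ i = ((n : ℝ) - i) * r ^ i + r ^ i := by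
    intro i _; push_cast; ring
  rw [Tg, Finset.sum_congr rfl h, Finset.sum_add_distrib, Finset.sum_range_succ]
  simp [Tg, Sg]

lemma Sg_pos (r : ℝ) (hr : 0 < r) (n : ℕ) : 0 < Sg r n := by
  apply Finset.sum_pos
  · intro i _; positivity
  · exact ⟨0, Finset.mem_range.mpr (Nat.succ_pos n)⟩

lemma keyrec (lam mu c x : ℝ) (hmu : mu ≠ 0) (n : ℕ) :
    mu * (Sg (lam / mu) (n + 2) * x + (c / mu) * Tg (lam / mu) (n + 2))
      = (lam + mu) * (Sg (lam / mu) (n + 1) * x + (c / mu) * Tg (lam / mu) (n + 1))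
        - lam * (Sg (lam / mu) n * x + (c / mu) * Tg (lam / mu) n) + c := by
  set r := lam / mu with hr
  have hrm : r * mu = lam := by rw [hr]; field_simp
  have hS1 : Sg r (n + 1) = Sg r n + r ^ (n + 1) := Sg_succ r n
  have hS2 : Sg r (n + 2) = Sg r (n + 1) + r * r ^ (n + 1) := by
    rw [Sg_succ r (n + 1), pow_succ]; ring
  have hT1 : Tg r (n + 1) = Tg r n + Sg r n := Tg_succ r n
  have hT2 : Tg r (n + 2) = Tg r (n + 1) + Sg r (n + 1) := Tg_succ r (n + 1)
  have hgeo : Sg r n + r ^ (n + 1) = 1 + r * Sg r n := by rw [← hS1, Sg_shift]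
  set a := Sg r n
  set t := Tg r n
  set p := r ^ (n + 1)
  rw [hT2, hT1, hS2, hS1, ← hrm]
  have hc : c / mu * mu = c := div_mul_cancel₀ c hmu
  linear_combination (c / mu) * mu * hgeo + hc

/-- boundary identity -/
lemma keybound (lam mu c x : ℝ) (hmu : mu ≠ 0) :
    (lam + mu) * (Sg (lam / mu) 0 * x + (c / mu) * Tg (lam / mu) 0)
      = mu * (Sg (lam / mu) 1 * x + (c / mu) * Tg (lam / mu) 1) - c := by
  rw [Sg_zero, Tg_zero, Sg_one, Tg_one]
  have h : mu * (lam / mu) = lam := by field_simp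
  have h2 : mu * mu⁻¹ = 1 := mul_inv_cancel₀ hmu
  linear_combination (-x) * h - c * h2

/-- backward solution formula for any solution -/
lemma lcfs_back (lam mu v c : ℝ) (hmu : mu ≠ 0) (K : ℕ) (w : ℕ → ℝ)
    (hw : LCFSValueSystem lam mu v c K w) :
    ∀ j, j ≤ K → w (K - j) = Sg (lam / mu) j * w K + (c / mu) * Tg (lam / mu) j := by
  intro j
  induction j using Nat.strong_induction_on with
  | _ j ih =>
    intro hj
    match j with
    | 0 => simp [Sg_zero, Tg_zero]
    | 1 =>
      rw [Sg_one, Tg_one]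
      have hb := hw.2.2
      field_simp
      linarith
    | (j + 2) =>
      have hk1 : 1 ≤ K - (j + 1) := by omega
      have hk2 : K - (j + 1) ≤ K - 1 := by omega
      have heq := hw.2.1 (K - (j + 1)) hk1 hk2
      have e1 : K - (j + 1) - 1 = K - (j + 2) := by omega
      have e2 : K - (j + 1) + 1 = K - j := by omega
      rw [e1, e2, ih (j + 1) (by omega) (by omega), ih j (by omega) (by omega)] at heq
      have hkey := keyrec lam mu c (w K) hmu j
      have : mu * w (K - (j + 2)) =
          mu * (Sg (lam / mu) (j + 2) * w K + (c / mu) * Tg (lam / mu) (j + 2)) := by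
        rw [hkey]; linarith
      exact mul_left_cancel₀ hmu this

/-- **LCFS incumbent values.** For `λ, μ, v, c > 0` and `K ≥ 1`, the linear system
`LCFSValueSystem` has a solution, the solution is unique in coordinates `1, ..., K`, and its
last coordinate equals `w K = (1/S_K) (v − (c/μ) ∑_{j=0}^{K−1} (K−j) ρ^j)` with `ρ = λ/μ`
and `S_K = ∑_{j=0}^K ρ^j`. -/
theorem lcfs_value_system_unique_solution (lam mu v c : ℝ)
    (hlam : 0 < lam) (hmu : 0 < mu) (hv : 0 < v) (hc : 0 < c)
    (K : ℕ) (hK : 1 ≤ K) :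
    let ρ := lam / mu
    let S : ℕ → ℝ := fun n => ∑ j ∈ Finset.range (n + 1), ρ ^ j
    (∃ w : ℕ → ℝ, LCFSValueSystem lam mu v c K w) ∧
    (∀ w w' : ℕ → ℝ, LCFSValueSystem lam mu v c K w →
      LCFSValueSystem lam mu v c K w' → ∀ k ≤ K, w k = w' k) ∧
    (∀ w : ℕ → ℝ, LCFSValueSystem lam mu v c K w →
      w K = (1 / S K) *
        (v - (c / mu) * ∑ j ∈ Finset.range K, ((K : ℝ) - (j : ℝ)) * ρ ^ j)) := by
  intro ρ S
  have hmu' : mu ≠ 0 := ne_of_gt hmu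
  have hρ : 0 < ρ := div_pos hlam hmu
  have hSpos : 0 < Sg ρ K := Sg_pos ρ hρ K
  have hSne : Sg ρ K ≠ 0 := ne_of_gt hSpos
  -- the formula, for any solution
  have hform : ∀ w : ℕ → ℝ, LCFSValueSystem lam mu v c K w →
      w K = (1 / Sg ρ K) * (v - (c / mu) * Tg ρ K) := by
    intro w hw
    have h := lcfs_back lam mu v c hmu' K w hw K le_rfl
    rw [Nat.sub_self, hw.1] at h
    have hρeq : ρ = lam / mu := rfl
    rw [← hρeq] at h
    field_simp at h ⊢
    linear_combination -h
  refine ⟨?_, ?_, ?_⟩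
  · -- existence
    set u := (1 / Sg ρ K) * (v - (c / mu) * Tg ρ K) with hu
    refine ⟨fun k => Sg ρ (K - k) * u + (c / mu) * Tg ρ (K - k), ?_, ?_, ?_⟩
    · simp only [Nat.sub_zero]
      rw [hu]; field_simp; ring
    · intro k hk1 hk2
      obtain ⟨j, hj⟩ : ∃ j, K - k = j + 1 := ⟨K - k - 1, by omega⟩
      have e1 : K - (k - 1) = j + 2 := by omega
      have e2 : K - (k + 1) = j := by omega
      simp only [hj, e1, e2]
      have := keyrec lam mu c u hmu' j
      linarith
    · have e0 : K - K = 0 := Nat.sub_self K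
      have e1 : K - (K - 1) = 1 := by omega
      simp only [e0, e1]
      exact keybound lam mu c u hmu'
  · -- uniqueness
    intro w w' hw hw' k hk
    have hK' : w K = w' K := by rw [hform w hw, hform w' hw']
    have e : K - (K - k) = k := by omega
    have h1 := lcfs_back lam mu v c hmu' K w hw (K - k) (by omega)
    have h2 := lcfs_back lam mu v c hmu' K w' hw' (K - k) (by omega)
    rw [e] at h1 h2
    rw [h1, h2, hK']
  · intro w hw
    exact hform w hw
end

section
/- Let λ, μ, v, c > 0, ρ := λ/μ, K ≥ 1 an integer, S_K := Σ_{j=0}^K ρ^j, p_k^K := ρ^k / S_K for 0 ≤ k ≤ K, and W(K) := Σ_{k=1}^K p_k^K (μ v − c k) with W(0) := 0. Let (w_1, ..., w_K) be the unique solution of the system (λ + μ) w_k = μ w_{k−1} + λ w_{k+1} − c for k = 1, ..., K−1 and (λ + μ) w_K = μ w_{K−1} − c, with the convention w_0 := v. Then W(K) − W(K−1) = (μ ρ^K / S_{K−1}) · w_K. In particular, w_K ≥ 0 if and only if W(K) ≥ W(K−1). -/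
/-- **Hassin's key identity.** With `ρ = λ/μ`, `S n = ∑_{j=0}^n ρ^j`, stationary probabilities
`p k K = ρ^k / S K`, and steady-state welfare `W K = ∑_{k=1}^K p k K (μv − ck)` (`W 0 = 0`),
if `w` solves the LCFS incumbent-value system with cap `K`, then
`W K − W (K−1) = (μ ρ^K / S (K−1)) * w K`; in particular `w K ≥ 0 ↔ W (K−1) ≤ W K`. -/
theorem lcfs_welfare_increment (lam mu v c : ℝ)
    (hlam : 0 < lam) (hmu : 0 < mu) (hv : 0 < v) (hc : 0 < c)
    (K : ℕ) (hK : 1 ≤ K) (w : ℕ → ℝ) (hw : LCFSValueSystem lam mu v c K w) :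
    let ρ := lam / mu
    let S : ℕ → ℝ := fun n => ∑ j ∈ Finset.range (n + 1), ρ ^ j
    let W : ℕ → ℝ := fun n => ∑ k ∈ Finset.Icc 1 n, (ρ ^ k / S n) * (mu * v - c * k)
    W K - W (K - 1) = (mu * ρ ^ K / S (K - 1)) * w K ∧
    (0 ≤ w K ↔ W (K - 1) ≤ W K) := by
  intro ρ S W
  obtain ⟨hw0, hmid, hlast⟩ := hw
  obtain ⟨n, rfl⟩ : ∃ n, K = n + 1 := ⟨K - 1, (Nat.succ_pred_eq_of_pos hK).symm⟩
  have hρ : 0 < ρ := div_pos hlam hmu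
  have hmuρ : mu * ρ = lam := by show mu * (lam / mu) = lam; field_simp
  set T : ℕ → ℝ := fun m => ∑ j ∈ Finset.range m, ρ ^ j with hTdef
  have hTs : ∀ m : ℕ, T (m + 1) = T m + ρ ^ m := by
    intro m; simp [hTdef, Finset.sum_range_succ]
  have hTpos : ∀ m : ℕ, 0 < T (m + 1) := by
    intro m
    apply Finset.sum_pos
    · intro i _; positivity
    · exact ⟨0, Finset.mem_range.2 (Nat.succ_pos m)⟩
  have hST : ∀ m : ℕ, S m = T (m + 1) := fun m => rfl
  -- key induction: partial linear combinations of the balance equations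
  have claim : ∀ m : ℕ, m ≤ n →
      mu * T (m + 1) * w m - lam * T m * w (m + 1)
        = mu * v - c * ∑ k ∈ Finset.range m, T (k + 1) := by
    intro m hm
    induction m with
    | zero => simp [hTdef, hw0]
    | succ m ih =>
      have ihm := ih (Nat.le_of_succ_le hm)
      have he := hmid (m + 1) (by omega) (by omega)
      simp only [Nat.add_sub_cancel] at he
      rw [Finset.sum_range_succ, hTs (m + 1)]
      linear_combination ihm + T (m + 1) * he + ρ ^ m * w (m + 1) * hmuρ
        - lam * w (m + 1) * hTs m
  -- the aggregate identity determining w (n+1)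
  have key : mu * T (n + 2) * w (n + 1)
      = mu * v - c * ∑ k ∈ Finset.range (n + 1), T (k + 1) := by
    have h1 := claim n le_rfl
    have he := hlast
    simp only [Nat.add_sub_cancel] at he
    rw [Finset.sum_range_succ, hTs (n + 1)]
    linear_combination h1 + T (n + 1) * he + ρ ^ n * w (n + 1) * hmuρ
      - lam * w (n + 1) * hTs n
  -- sum of partial sums identity
  have sumS : ∀ m : ℕ, ∑ k ∈ Finset.range (m + 1), T (k + 1)
      = (m + 1 : ℝ) * T (m + 1) - ∑ k ∈ Finset.Icc 1 m, (k : ℝ) * ρ ^ k := by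
    intro m
    induction m with
    | zero => simp
    | succ m ih =>
      rw [Finset.sum_range_succ, ih, Finset.sum_Icc_succ_top (by omega : 1 ≤ m + 1)]
      push_cast
      linear_combination (-((m : ℝ) + 1)) * hTs (m + 1)
  -- geometric tail
  have hIcc : ∀ m : ℕ, ∑ k ∈ Finset.Icc 1 m, ρ ^ k = T (m + 1) - 1 := by
    intro m
    induction m with
    | zero => simp [hTdef]
    | succ m ih =>
      rw [Finset.sum_Icc_succ_top (by omega : 1 ≤ m + 1), ih]
      linear_combination - hTs (m + 1)
  -- welfare numerators
  set A : ℕ → ℝ := fun m => ∑ k ∈ Finset.Icc 1 m, ρ ^ k * (mu * v - c * k) with hAdef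
  have hW : ∀ m : ℕ, W m = A m / S m := by
    intro m
    simp only [hAdef, Finset.sum_div]
    apply Finset.sum_congr rfl
    intro k _
    ring
  have hA : ∀ m : ℕ, A m = mu * v * (T (m + 1) - 1)
      - c * ∑ k ∈ Finset.Icc 1 m, (k : ℝ) * ρ ^ k := by
    intro m
    rw [← hIcc m]
    simp only [hAdef, Finset.mul_sum, ← Finset.sum_sub_distrib]
    apply Finset.sum_congr rfl
    intro k _
    ring
  have hAsucc : A (n + 1) = A n + ρ ^ (n + 1) * (mu * v - c * (n + 1)) := by
    simp only [hAdef, Finset.sum_Icc_succ_top (by omega : 1 ≤ n + 1)]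
    push_cast; ring
  have hT1ne : T (n + 1) ≠ 0 := ne_of_gt (hTpos n)
  have hT2ne : T (n + 2) ≠ 0 := ne_of_gt (hTpos (n + 1))
  have num : A (n + 1) * T (n + 1) - A n * T (n + 2)
      = ρ ^ (n + 1) * (mu * T (n + 2) * w (n + 1)) := by
    rw [sumS n] at key
    linear_combination T (n + 1) * hAsucc - A n * hTs (n + 1) - ρ ^ (n + 1) * key
      - ρ ^ (n + 1) * hA n
  have main : W (n + 1) - W (n + 1 - 1) = (mu * ρ ^ (n + 1) / S (n + 1 - 1)) * w (n + 1) := by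
    simp only [Nat.add_sub_cancel, hW, hST]
    rw [div_sub_div _ _ hT2ne hT1ne, div_mul_eq_mul_div,
      div_eq_div_iff (mul_ne_zero hT2ne hT1ne) hT1ne]
    linear_combination T (n + 1) * num
  refine ⟨main, ?_⟩
  have hpos : 0 < mu * ρ ^ (n + 1) / S (n + 1 - 1) := by
    simp only [Nat.add_sub_cancel, hST]
    exact div_pos (by positivity) (hTpos n)
  constructor
  · intro h
    nlinarith [main, mul_nonneg (le_of_lt hpos) h]
  · intro h
    by_contra hneg
    push_neg at hneg
    nlinarith [main, mul_neg_of_pos_of_neg hpos hneg]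
end

section
/- Let λ, μ > 0 and K ≥ 1 an integer. Consider the linear system in unknowns (τ_1, ..., τ_K) ∈ ℝ^K, with the convention τ_0 := 0: (μ + λ) τ_k = μ · ((k−1)/k) · τ_{k−1} + λ τ_{k+1} + 1 for k = 1, ..., K−1, and μ τ_K = μ · ((K−1)/K) · τ_{K−1} + 1. This system has a unique solution, and it satisfies 1/μ ≤ τ_1 ≤ τ_2 ≤ ... ≤ τ_K ≤ K/μ. -/
/-- Discrete minimum principle for the SIRO tridiagonal operator. -/
lemma siro_minp (lam mu : ℝ) (hlam : 0 < lam) (hmu : 0 < mu) (N : ℕ) (w : ℕ → ℝ)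
    (h0 : 0 ≤ w 0)
    (hint : ∀ k : ℕ, 1 ≤ k → k < N →
      mu * (((k : ℝ) - 1) / k) * w (k - 1) + lam * w (k + 1) ≤ (mu + lam) * w k)
    (α β : ℝ) (hβ0 : 0 ≤ β) (hαβ : β < α)
    (htop : β * w (N - 1) ≤ α * w N) :
    ∀ k ≤ N, 0 ≤ w k := by
  by_contra hcon
  push_neg at hcon
  obtain ⟨k0, hk0N, hk0⟩ := hcon
  obtain ⟨j, hjmem, hjmin⟩ := Finset.exists_min_image (Finset.range (N+1)) w ⟨0, by simp⟩
  have hjN : j ≤ N := by have := Finset.mem_range.1 hjmem; omega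
  have hm : w j < 0 :=
    lt_of_le_of_lt (hjmin k0 (Finset.mem_range.2 (by omega))) hk0
  rcases Nat.eq_zero_or_pos j with hj0 | hj1
  · subst hj0; linarith
  rcases eq_or_lt_of_le hjN with hjN' | hjlt
  · subst hjN'
    have hw1 : w j ≤ w (j-1) := hjmin (j-1) (Finset.mem_range.2 (by omega))
    have h1 : β * w j ≤ β * w (j-1) := mul_le_mul_of_nonneg_left hw1 hβ0
    nlinarith [mul_pos (sub_pos.2 hαβ) (neg_pos.2 hm)]
  · have hE := hint j hj1 hjlt
    have hwl : w j ≤ w (j-1) := hjmin (j-1) (Finset.mem_range.2 (by omega))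
    have hwr : w j ≤ w (j+1) := hjmin (j+1) (Finset.mem_range.2 (by omega))
    have hj1R : (1:ℝ) ≤ (j:ℝ) := by exact_mod_cast hj1
    have hc0 : 0 ≤ ((j:ℝ) - 1) / j := div_nonneg (by linarith) (by linarith)
    have hc1 : ((j:ℝ) - 1) / j < 1 := by
      rw [div_lt_one (by linarith)]; linarith
    have h1 : mu * (((j:ℝ) - 1) / j) * w j ≤ mu * (((j:ℝ) - 1) / j) * w (j-1) :=
      mul_le_mul_of_nonneg_left hwl (by positivity)
    have h2 : lam * w j ≤ lam * w (j+1) := mul_le_mul_of_nonneg_left hwr hlam.le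
    nlinarith [mul_pos (mul_pos hmu (sub_pos.2 hc1)) (neg_pos.2 hm)]

/-- The dynamic-programming equations for the expected remaining waiting times `τ k` of a buyer
in a queue of length `k` under the SIRO discipline with cap `K`, with the convention `τ 0 = 0`:
`(μ+λ) τ k = μ ((k−1)/k) τ (k−1) + λ τ (k+1) + 1` for `k = 1, ..., K−1`, and
`μ τ K = μ ((K−1)/K) τ (K−1) + 1`. -/
def SIROWaitSystem (lam mu : ℝ) (K : ℕ) (τ : ℕ → ℝ) : Prop :=
  τ 0 = 0 ∧
  (∀ k : ℕ, 1 ≤ k → k ≤ K - 1 →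
    (mu + lam) * τ k = mu * (((k : ℝ) - 1) / k) * τ (k - 1) + lam * τ (k + 1) + 1) ∧
  mu * τ K = mu * (((K : ℝ) - 1) / K) * τ (K - 1) + 1

lemma siro_beta (mu : ℝ) (hmu : 0 < mu) (K : ℕ) (hK : 1 ≤ K) :
    0 ≤ mu * (((K : ℝ) - 1) / K) ∧ mu * (((K : ℝ) - 1) / K) < mu := by
  have hK1 : (1:ℝ) ≤ (K:ℝ) := by exact_mod_cast hK
  constructor
  · exact mul_nonneg hmu.le (div_nonneg (by linarith) (by linarith))
  · nlinarith [div_lt_one (show (0:ℝ) < (K:ℝ) by linarith) |>.mpr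
      (show (K:ℝ) - 1 < K by linarith)]

lemma siro_nonneg (lam mu : ℝ) (hlam : 0 < lam) (hmu : 0 < mu) (K : ℕ) (hK : 1 ≤ K)
    (τ : ℕ → ℝ) (h : SIROWaitSystem lam mu K τ) : ∀ k ≤ K, 0 ≤ τ k := by
  obtain ⟨hβ0, hαβ⟩ := siro_beta mu hmu K hK
  refine siro_minp lam mu hlam hmu K τ (le_of_eq h.1.symm) ?_ mu
    (mu * (((K : ℝ) - 1) / K)) hβ0 hαβ ?_
  · intro k hk1 hk2
    have := h.2.1 k hk1 (by omega)
    linarith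
  · have := h.2.2
    linarith

/-- Interior equation with denominators cleared. -/
lemma siro_clear (lam mu : ℝ) (K : ℕ)
    (τ : ℕ → ℝ) (h : SIROWaitSystem lam mu K τ) (j : ℕ) (hj : j + 1 ≤ K - 1) :
    (mu + lam) * τ (j+1) * ((j:ℝ)+1)
      = mu * (j:ℝ) * τ j + lam * τ (j+2) * ((j:ℝ)+1) + ((j:ℝ)+1) := by
  have E1 := h.2.1 (j+1) (by omega) hj
  simp only [Nat.add_sub_cancel] at E1
  push_cast at E1
  have hj1 : ((j:ℝ)+1) ≠ 0 := by positivity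
  field_simp at E1
  linear_combination E1

/-- Top equation with denominators cleared. -/
lemma siro_clear_top (lam mu : ℝ) (K : ℕ) (hK : 1 ≤ K)
    (τ : ℕ → ℝ) (h : SIROWaitSystem lam mu K τ) :
    mu * τ K * (K:ℝ) = mu * ((K:ℝ) - 1) * τ (K-1) + (K:ℝ) := by
  have E := h.2.2
  have hKR : (1:ℝ) ≤ (K:ℝ) := by exact_mod_cast hK
  have hK0 : ((K:ℝ)) ≠ 0 := by linarith
  field_simp at E
  linear_combination E

lemma siro_mono (lam mu : ℝ) (hlam : 0 < lam) (hmu : 0 < mu) (K : ℕ) (hK : 1 ≤ K)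
    (τ : ℕ → ℝ) (h : SIROWaitSystem lam mu K τ) :
    ∀ k, 1 ≤ k → k < K → τ k ≤ τ (k + 1) := by
  have hnn := siro_nonneg lam mu hlam hmu K hK τ h
  have key : ∀ k ≤ K - 1, 0 ≤ (fun k => τ (k+1) - τ k) k := by
    refine siro_minp lam mu hlam hmu (K-1) (fun k => τ (k+1) - τ k) ?_ ?_
      (mu + lam) (mu * (((K : ℝ) - 1) / K)) ?_ ?_ ?_
    · rw [h.1]
      simpa using hnn 1 hK
    · intro k hk1 hklt
      obtain ⟨j, rfl⟩ : ∃ j, k = j + 1 := ⟨k - 1, by omega⟩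
      simp only [Nat.add_sub_cancel]
      have E1c := siro_clear lam mu K τ h j (by omega)
      have E2c := siro_clear lam mu K τ h (j+1) (by omega)
      simp only [show j+1+1 = j+2 from rfl, show j+1+2 = j+3 from rfl] at E2c
      push_cast at E2c
      have hj1 : (0:ℝ) < ((j:ℝ)+1) := by positivity
      have hj2 : (0:ℝ) < ((j:ℝ)+2) := by positivity
      have hτ1 : 0 ≤ τ (j+1) := hnn (j+1) (by omega)
      have keyeq : (mu + lam) * (τ (j+2) - τ (j+1))
          = mu * (((j:ℝ) + 1 - 1) / ((j:ℝ)+1)) * (τ (j+1) - τ j)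
            + lam * (τ (j+3) - τ (j+2))
            + mu * τ (j+1) / (((j:ℝ)+1) * ((j:ℝ)+2)) := by
        field_simp
        linear_combination ((j:ℝ)+1) * E2c - ((j:ℝ)+2) * E1c
      have hsrc : 0 ≤ mu * τ (j+1) / (((j:ℝ)+1) * ((j:ℝ)+2)) := by positivity
      push_cast
      linarith [keyeq, hsrc]
    · exact (siro_beta mu hmu K hK).1
    · have := (siro_beta mu hmu K hK).2
      linarith
    · rcases Nat.lt_or_ge K 2 with hK2 | hK2
      · interval_cases K
        norm_num
        rw [h.1]
        have h1 : 0 ≤ τ 1 := hnn 1 (by omega)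
        nlinarith
      · obtain ⟨n, rfl⟩ : ∃ n, K = n + 2 := ⟨K - 2, by omega⟩
        have E1c := siro_clear lam mu (n+2) τ h n (by omega)
        have E2c := siro_clear_top lam mu (n+2) (by omega) τ h
        simp only [show n + 2 - 1 = n + 1 by omega] at E2c
        push_cast at E2c
        have hn1 : (0:ℝ) < ((n:ℝ)+1) := by positivity
        have hn2 : (0:ℝ) < ((n:ℝ)+2) := by positivity
        have hτn : 0 ≤ τ n := hnn n (by omega)
        have hw : (n + 2 - 1 - 1 : ℕ) = n := by omega
        rw [hw]
        have keyeq : (mu + lam) * (τ (n+2) - τ (n+1))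
            = mu * (((n:ℝ) + 2 - 1) / ((n:ℝ)+2)) * (τ (n+1) - τ n)
              + mu * τ n / (((n:ℝ)+1) * ((n:ℝ)+2)) := by
          field_simp
          linear_combination ((n:ℝ)+1) * E2c - ((n:ℝ)+2) * E1c
        have hsrc : 0 ≤ mu * τ n / (((n:ℝ)+1) * ((n:ℝ)+2)) := by positivity
        push_cast
        linarith [keyeq, hsrc]
  intro k hk1 hkK
  have := key k (by omega)
  simpa using this

/-- Homogeneous solution of the SIRO recursion with `a 0 = 0`, `a 1 = 1`. -/
noncomputable def siroA (lam mu : ℝ) : ℕ → ℝ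
  | 0 => 0
  | 1 => 1
  | (j+2) => ((mu + lam) * siroA lam mu (j+1) - mu * ((j:ℝ)/((j:ℝ)+1)) * siroA lam mu j) / lam

/-- Particular solution of the SIRO recursion with `b 0 = b 1 = 0`. -/
noncomputable def siroB (lam mu : ℝ) : ℕ → ℝ
  | 0 => 0
  | 1 => 0
  | (j+2) => ((mu + lam) * siroB lam mu (j+1) - mu * ((j:ℝ)/((j:ℝ)+1)) * siroB lam mu j - 1) / lam

lemma siroA_mono (lam mu : ℝ) (hlam : 0 < lam) (hmu : 0 < mu) :
    ∀ k : ℕ, 0 ≤ siroA lam mu k ∧ siroA lam mu k ≤ siroA lam mu (k+1) := by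
  intro k
  induction k with
  | zero => simp [siroA]
  | succ k ih =>
    obtain ⟨h0, h1⟩ := ih
    refine ⟨le_trans h0 h1, ?_⟩
    show siroA lam mu (k+1) ≤ siroA lam mu (k+2)
    rw [siroA, le_div_iff₀ hlam]
    have hck : (k:ℝ)/((k:ℝ)+1) ≤ 1 := by
      rw [div_le_one (by positivity)]; linarith
    have h2 : (k:ℝ)/((k:ℝ)+1) * siroA lam mu k ≤ siroA lam mu k :=
      (mul_le_of_le_one_left h0 hck)
    have h3 : mu * ((k:ℝ)/((k:ℝ)+1) * siroA lam mu k) ≤ mu * siroA lam mu (k+1) :=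
      mul_le_mul_of_nonneg_left (le_trans h2 h1) hmu.le
    nlinarith

lemma siroA_one_le (lam mu : ℝ) (hlam : 0 < lam) (hmu : 0 < mu) (k : ℕ) (hk : 1 ≤ k) :
    1 ≤ siroA lam mu k := by
  have hmono : Monotone (siroA lam mu) :=
    monotone_nat_of_le_succ (fun k => (siroA_mono lam mu hlam hmu k).2)
  have := hmono hk
  simpa [siroA] using this

lemma siro_exists (lam mu : ℝ) (hlam : 0 < lam) (hmu : 0 < mu) (K : ℕ) (hK : 1 ≤ K) :
    ∃ τ : ℕ → ℝ, SIROWaitSystem lam mu K τ := by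
  have hKR : (1:ℝ) ≤ (K:ℝ) := by exact_mod_cast hK
  set c : ℝ := ((K : ℝ) - 1) / K with hc
  have hc0 : 0 ≤ c := div_nonneg (by linarith) (by linarith)
  have hc1 : c < 1 := by rw [hc, div_lt_one (by linarith)]; linarith
  have hmono : Monotone (siroA lam mu) :=
    monotone_nat_of_le_succ (fun k => (siroA_mono lam mu hlam hmu k).2)
  have hAK1 : 1 ≤ siroA lam mu K := siroA_one_le lam mu hlam hmu K hK
  have hA0 : 0 ≤ siroA lam mu (K-1) := (siroA_mono lam mu hlam hmu (K-1)).1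
  have hAle : siroA lam mu (K-1) ≤ siroA lam mu K := hmono (by omega)
  have hD : 0 < siroA lam mu K - c * siroA lam mu (K-1) := by nlinarith
  have hDmu : (mu * (siroA lam mu K - c * siroA lam mu (K-1))) ≠ 0 := by positivity
  set t : ℝ := (1 + mu * c * siroB lam mu (K-1) - mu * siroB lam mu K) /
      (mu * (siroA lam mu K - c * siroA lam mu (K-1))) with htdef
  refine ⟨fun k => t * siroA lam mu k + siroB lam mu k, ?_, ?_, ?_⟩
  · simp [siroA, siroB]
  · intro k hk1 _
    obtain ⟨j, rfl⟩ : ∃ j, k = j + 1 := ⟨k - 1, by omega⟩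
    simp only [Nat.add_sub_cancel, show j+1+1 = j+2 from rfl]
    push_cast
    show (mu + lam) * (t * siroA lam mu (j+1) + siroB lam mu (j+1))
        = mu * (((j:ℝ) + 1 - 1) / ((j:ℝ)+1)) * (t * siroA lam mu j + siroB lam mu j)
          + lam * (t * siroA lam mu (j+2) + siroB lam mu (j+2)) + 1
    rw [siroA, siroB]
    have hj1 : ((j:ℝ)+1) ≠ 0 := by positivity
    field_simp
    ring
  · show mu * (t * siroA lam mu K + siroB lam mu K)
        = mu * c * (t * siroA lam mu (K-1) + siroB lam mu (K-1)) + 1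
    have ht : t * (mu * (siroA lam mu K - c * siroA lam mu (K-1)))
        = 1 + mu * c * siroB lam mu (K-1) - mu * siroB lam mu K :=
      div_mul_cancel₀ _ hDmu
    linear_combination ht

/-- **SIRO waiting times.** For `λ, μ > 0` and `K ≥ 1`, the SIRO waiting-time system has a
solution, the solution is unique in coordinates `1, ..., K`, and any solution satisfies
`1/μ ≤ τ 1 ≤ τ 2 ≤ ... ≤ τ K ≤ K/μ`. -/
theorem siro_wait_system_unique_solution_and_bounds (lam mu : ℝ)
    (hlam : 0 < lam) (hmu : 0 < mu) (K : ℕ) (hK : 1 ≤ K) :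
    (∃ τ : ℕ → ℝ, SIROWaitSystem lam mu K τ) ∧
    (∀ τ τ' : ℕ → ℝ, SIROWaitSystem lam mu K τ → SIROWaitSystem lam mu K τ' →
      ∀ k ≤ K, τ k = τ' k) ∧
    (∀ τ : ℕ → ℝ, SIROWaitSystem lam mu K τ →
      1 / mu ≤ τ 1 ∧ (∀ k : ℕ, 1 ≤ k → k < K → τ k ≤ τ (k + 1)) ∧ τ K ≤ (K : ℝ) / mu) := by
  obtain ⟨hβ0, hαβ⟩ := siro_beta mu hmu K hK
  refine ⟨siro_exists lam mu hlam hmu K hK, ?_, ?_⟩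
  · -- uniqueness
    have main : ∀ τ τ' : ℕ → ℝ, SIROWaitSystem lam mu K τ → SIROWaitSystem lam mu K τ' →
        ∀ k ≤ K, 0 ≤ τ k - τ' k := by
      intro τ τ' h h'
      refine siro_minp lam mu hlam hmu K (fun k => τ k - τ' k) ?_ ?_ mu
        (mu * (((K : ℝ) - 1) / K)) hβ0 hαβ ?_
      · rw [h.1, h'.1]; norm_num
      · intro k hk1 hk2
        have E := h.2.1 k hk1 (by omega)
        have E' := h'.2.1 k hk1 (by omega)
        linarith
      · have E := h.2.2
        have E' := h'.2.2
        linarith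
    intro τ τ' h h' k hk
    have h1 := main τ τ' h h' k hk
    have h2 := main τ' τ h' h k hk
    linarith
  · -- bounds
    intro τ h
    have hnn := siro_nonneg lam mu hlam hmu K hK τ h
    have hmono := siro_mono lam mu hlam hmu K hK τ h
    have hKR : (1:ℝ) ≤ (K:ℝ) := by exact_mod_cast hK
    refine ⟨?_, hmono, ?_⟩
    · -- 1/mu ≤ τ 1
      rw [div_le_iff₀ hmu]
      rcases Nat.lt_or_ge K 2 with hK2 | hK2
      · interval_cases K
        have E := h.2.2
        rw [h.1] at E
        norm_num at E
        linarith
      · have E := h.2.1 1 le_rfl (by omega)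
        rw [h.1] at E
        norm_num at E
        have h12 : τ 1 ≤ τ 2 := hmono 1 le_rfl (by omega)
        nlinarith
    · -- τ K ≤ K / mu
      have hKK : τ (K - 1) ≤ τ K := by
        rcases Nat.lt_or_ge K 2 with hK2 | hK2
        · interval_cases K
          simp only [Nat.sub_self, h.1]
          exact hnn 1 (by omega)
        · have := hmono (K-1) (by omega) (by omega)
          have hw : K - 1 + 1 = K := by omega
          rwa [hw] at this
      have E := siro_clear_top lam mu K hK τ h
      have h1 : mu * ((K:ℝ) - 1) * τ (K-1) ≤ mu * ((K:ℝ) - 1) * τ K :=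
        mul_le_mul_of_nonneg_left hKK (by nlinarith)
      rw [le_div_iff₀ hmu]
      nlinarith
end

section
/- Let λ, μ > 0 and K ≥ 2 an integer, and let (τ_1, ..., τ_K) be the unique solution of the system (with τ_0 := 0): (μ + λ) τ_k = μ · ((k−1)/k) · τ_{k−1} + λ τ_{k+1} + 1 for k = 1, ..., K−1, and μ τ_K = μ · ((K−1)/K) · τ_{K−1} + 1. Then τ_1 > 1/μ and τ_K < K/μ. -/
/-- **Strict bounds on SIRO waiting times.** For `λ, μ > 0` and `K ≥ 2`, any solution of the
SIRO waiting-time system satisfies `τ 1 > 1/μ` and `τ K < K/μ`: a buyer joining a full queue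
waits strictly less under SIRO than the `K/μ` she would wait under FCFS. -/
theorem siro_wait_strict_bounds (lam mu : ℝ)
    (hlam : 0 < lam) (hmu : 0 < mu) (K : ℕ) (hK : 2 ≤ K)
    (τ : ℕ → ℝ) (hτ : SIROWaitSystem lam mu K τ) :
    1 / mu < τ 1 ∧ τ K < (K : ℝ) / mu := by
  obtain ⟨h0, hmid, hlast⟩ := hτ
  have hK1 : (1:ℕ) ≤ K := by omega
  have hKR : (2:ℝ) ≤ (K:ℝ) := by exact_mod_cast hK
  have hKRpos : (0:ℝ) < (K:ℝ) := by linarith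
  constructor
  · -- lower bound via minimum principle
    obtain ⟨k0, hk0mem, hk0min⟩ := Finset.exists_min_image (Finset.Icc 1 K) τ
      ⟨1, Finset.mem_Icc.mpr ⟨le_rfl, hK1⟩⟩
    obtain ⟨hk0a, hk0b⟩ := Finset.mem_Icc.mp hk0mem
    set m := τ k0 with hm
    have hmin : ∀ j, 1 ≤ j → j ≤ K → m ≤ τ j := fun j h1 h2 =>
      hk0min j (Finset.mem_Icc.mpr ⟨h1, h2⟩)
    have key : ∀ k, 2 ≤ k → k ≤ K → τ k = m → (k:ℝ) ≤ mu * m := by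
      intro k hk2 hkK hkm
      have hkR2 : (2:ℝ) ≤ (k:ℝ) := by exact_mod_cast hk2
      have hkRpos : (0:ℝ) < (k:ℝ) := by linarith
      have hc0 : 0 ≤ ((k:ℝ) - 1)/(k:ℝ) := div_nonneg (by linarith) hkRpos.le
      have hfrac : 1 - ((k:ℝ)-1)/(k:ℝ) = 1/(k:ℝ) := by field_simp; ring
      rcases eq_or_lt_of_le hkK with hEq | hlt
      · -- terminal equation
        subst hEq
        have hE := hlast
        rw [hkm] at hE
        have h1 : mu * (((k:ℝ)-1)/(k:ℝ)) * m ≤ mu * (((k:ℝ)-1)/(k:ℝ)) * τ (k-1) :=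
          mul_le_mul_of_nonneg_left (hmin (k-1) (by omega) (by omega))
            (mul_nonneg hmu.le hc0)
        have h3 : 1 ≤ mu * m * (1 - ((k:ℝ)-1)/(k:ℝ)) := by nlinarith [hE, h1]
        rw [hfrac, mul_one_div] at h3
        exact (one_le_div hkRpos).mp h3
      · -- interior equation
        have hE := hmid k (by omega) (by omega)
        rw [hkm] at hE
        have h1 : mu * (((k:ℝ)-1)/(k:ℝ)) * m ≤ mu * (((k:ℝ)-1)/(k:ℝ)) * τ (k-1) :=
          mul_le_mul_of_nonneg_left (hmin (k-1) (by omega) (by omega))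
            (mul_nonneg hmu.le hc0)
        have h2 : lam * m ≤ lam * τ (k+1) :=
          mul_le_mul_of_nonneg_left (hmin (k+1) (by omega) (by omega)) hlam.le
        have h3 : 1 ≤ mu * m * (1 - ((k:ℝ)-1)/(k:ℝ)) := by nlinarith [hE, h1, h2]
        rw [hfrac, mul_one_div] at h3
        exact (one_le_div hkRpos).mp h3
    have hτ1 : m ≤ τ 1 := hmin 1 le_rfl hK1
    rw [div_lt_iff₀ hmu]
    by_cases hk01 : k0 = 1
    · subst hk01
      have hE := hmid 1 le_rfl (by omega)
      rw [h0] at hE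
      norm_num at hE
      -- hE : (mu + lam) * τ 1 = lam * τ 2 + 1
      have hτ2 : m ≤ τ 2 := hmin 2 (by omega) hK
      rcases eq_or_lt_of_le hτ2 with he | hl
      · have h2 := key 2 le_rfl hK he.symm
        have : ((2:ℕ):ℝ) = (2:ℝ) := by norm_num
        rw [this] at h2
        rw [← hm]
        nlinarith
      · have h2 : lam * m < lam * τ 2 := mul_lt_mul_of_pos_left hl hlam
        rw [← hm] at hE ⊢
        nlinarith
    · have hk02 : 2 ≤ k0 := by omega
      have h2 := key k0 hk02 hk0b rfl
      have hkR2 : (2:ℝ) ≤ (k0:ℝ) := by exact_mod_cast hk02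
      nlinarith [mul_le_mul_of_nonneg_left hτ1 hmu.le]
  · -- upper bound via maximum principle
    obtain ⟨k1, hk1mem, hk1max⟩ := Finset.exists_max_image (Finset.Icc 0 K) τ
      ⟨0, Finset.mem_Icc.mpr ⟨Nat.zero_le 0, Nat.zero_le K⟩⟩
    obtain ⟨_, hk1b⟩ := Finset.mem_Icc.mp hk1mem
    set M := τ k1 with hM
    have hmax : ∀ j, j ≤ K → τ j ≤ M := fun j h2 =>
      hk1max j (Finset.mem_Icc.mpr ⟨Nat.zero_le j, h2⟩)
    have keymax : ∀ k, 1 ≤ k → k < K → τ k = M → mu * M ≤ (k:ℝ) := by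
      intro k hk1' hkK hkm
      have hkR1 : (1:ℝ) ≤ (k:ℝ) := by exact_mod_cast hk1'
      have hkRpos : (0:ℝ) < (k:ℝ) := by linarith
      have hc0 : 0 ≤ ((k:ℝ) - 1)/(k:ℝ) := div_nonneg (by linarith) hkRpos.le
      have hfrac : 1 - ((k:ℝ)-1)/(k:ℝ) = 1/(k:ℝ) := by field_simp; ring
      have hE := hmid k hk1' (by omega)
      rw [hkm] at hE
      have h1 : mu * (((k:ℝ)-1)/(k:ℝ)) * τ (k-1) ≤ mu * (((k:ℝ)-1)/(k:ℝ)) * M :=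
        mul_le_mul_of_nonneg_left (hmax (k-1) (by omega)) (mul_nonneg hmu.le hc0)
      have h2 : lam * τ (k+1) ≤ lam * M :=
        mul_le_mul_of_nonneg_left (hmax (k+1) (by omega)) hlam.le
      have h3 : mu * M * (1 - ((k:ℝ)-1)/(k:ℝ)) ≤ 1 := by nlinarith [hE, h1, h2]
      rw [hfrac, mul_one_div] at h3
      exact (div_le_one hkRpos).mp h3
    rw [lt_div_iff₀ hmu]
    have hτK : τ K ≤ M := hmax K le_rfl
    rcases eq_or_lt_of_le hk1b with hEq | hlt
    · -- max attained at K
      have hMK : τ K = M := by rw [hM, hEq]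
      have hE := hlast
      rw [hMK] at hE
      have hcpos : 0 < ((K:ℝ) - 1)/(K:ℝ) := div_pos (by linarith) hKRpos
      have hτK1 : τ (K-1) ≤ M := hmax (K-1) (by omega)
      rcases eq_or_lt_of_le hτK1 with he | hl
      · have h2 := keymax (K-1) (by omega) (by omega) he
        have hc : ((K-1:ℕ):ℝ) = (K:ℝ) - 1 := by
          push_cast [Nat.cast_sub hK1]; ring
        rw [hc] at h2
        nlinarith [mul_le_mul_of_nonneg_left hτK hmu.le]
      · have h1 : mu * (((K:ℝ)-1)/(K:ℝ)) * τ (K-1) < mu * (((K:ℝ)-1)/(K:ℝ)) * M :=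
          mul_lt_mul_of_pos_left hl (mul_pos hmu hcpos)
        have hfrac : 1 - ((K:ℝ)-1)/(K:ℝ) = 1/(K:ℝ) := by field_simp; ring
        have h3 : mu * M * (1 - ((K:ℝ)-1)/(K:ℝ)) < 1 := by nlinarith [hE, h1]
        rw [hfrac, mul_one_div] at h3
        have h4 : mu * M < (K:ℝ) := by
          rw [div_lt_one hKRpos] at h3; exact h3
        rw [hMK]
        linarith
    · -- max attained at k1 < K
      by_cases hk10 : k1 = 0
      · have hM0 : M = 0 := by rw [hM, hk10, h0]
        have h5 : τ K * mu ≤ 0 * mu := mul_le_mul_of_nonneg_right (by linarith) hmu.le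
        linarith
      · have h2 := keymax k1 (by omega) hlt rfl
        have hcast : (k1:ℝ) + 1 ≤ (K:ℝ) := by exact_mod_cast hlt
        have h5 := mul_le_mul_of_nonneg_left hτK hmu.le
        linarith
end

section
/- Let λ, μ > 0, ρ := λ/μ, K ≥ 1 an integer, and let (τ_1, ..., τ_K) be the unique solution of the system (with τ_0 := 0): (μ + λ) τ_k = μ · ((k−1)/k) · τ_{k−1} + λ τ_{k+1} + 1 for k = 1, ..., K−1, and μ τ_K = μ · ((K−1)/K) · τ_{K−1} + 1. Then Σ_{k=1}^K k ρ^k = μ · Σ_{k=1}^K ρ^k τ_k. -/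
/-- **Little's law for the SIRO queue.** With `ρ = λ/μ`, for any solution `τ` of the SIRO
waiting-time system with cap `K ≥ 1`: `∑_{k=1}^K k ρ^k = μ ∑_{k=1}^K ρ^k τ k`. -/
theorem siro_littles_law (lam mu : ℝ)
    (hlam : 0 < lam) (hmu : 0 < mu) (K : ℕ) (hK : 1 ≤ K)
    (τ : ℕ → ℝ) (hτ : SIROWaitSystem lam mu K τ) :
    let ρ := lam / mu
    ∑ k ∈ Finset.Icc 1 K, (k : ℝ) * ρ ^ k = mu * ∑ k ∈ Finset.Icc 1 K, ρ ^ k * τ k := by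
  obtain ⟨h0, hrec, hlast⟩ := hτ
  intro ρ
  obtain ⟨n, rfl⟩ : ∃ n, K = n + 1 := ⟨K - 1, (Nat.succ_pred_eq_of_pos hK).symm⟩
  have hmu' : mu ≠ 0 := ne_of_gt hmu
  have hlamρ : lam = mu * ρ := by show lam = mu * (lam / mu); field_simp
  have key : ∀ m : ℕ, m ≤ n →
      mu * ∑ k ∈ Finset.Icc 1 m, ρ ^ k * τ k
        = (∑ k ∈ Finset.Icc 1 m, (k : ℝ) * ρ ^ k)
          + mu * m * ρ ^ (m + 1) * (τ (m + 1) - τ m) := by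
    intro m
    induction m with
    | zero => intro _; simp
    | succ m ih =>
      intro hm
      have ihm := ih (Nat.le_of_succ_le hm)
      have h := hrec (m + 1) (Nat.le_add_left 1 m) (by simpa using hm)
      have hne : ((m : ℝ) + 1) ≠ 0 := by positivity
      have h3 : mu * ((m : ℝ) + 1) * τ (m + 1) - mu * m * τ m
          = ((m : ℝ) + 1) + lam * ((m : ℝ) + 1) * (τ (m + 2) - τ (m + 1)) := by
        have h' := h
        push_cast at h'
        field_simp at h'
        linear_combination h'
      rw [Finset.sum_Icc_succ_top (by omega : 1 ≤ m + 1),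
        Finset.sum_Icc_succ_top (by omega : 1 ≤ m + 1)]
      push_cast
      linear_combination ihm + ρ ^ (m + 1) * h3
        + ((m : ℝ) + 1) * ρ ^ (m + 1) * (τ (m + 2) - τ (m + 1)) * hlamρ
  have hkey := key n le_rfl
  have hne : ((n : ℝ) + 1) ≠ 0 := by positivity
  have hlast' : mu * ((n : ℝ) + 1) * τ (n + 1) = mu * n * τ n + ((n : ℝ) + 1) := by
    have h' := hlast
    push_cast at h'
    field_simp at h'
    linear_combination h'
  rw [Finset.sum_Icc_succ_top (by omega : 1 ≤ n + 1),
    Finset.sum_Icc_succ_top (by omega : 1 ≤ n + 1)]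
  push_cast
  linear_combination -hkey - ρ ^ (n + 1) * hlast'
end

section
/- Let λ, μ, v, c > 0, ρ := λ/μ, K ≥ 1 an integer, and let (τ_1, ..., τ_K) be the unique solution of the system (with τ_0 := 0): (μ + λ) τ_k = μ · ((k−1)/k) · τ_{k−1} + λ τ_{k+1} + 1 for k = 1, ..., K−1, and μ τ_K = μ · ((K−1)/K) · τ_{K−1} + 1. If v ≥ c τ_K, then Σ_{k=1}^K ρ^k (μ v − c k) ≥ 0. -/
/-- The waiting times solving the SIRO system are nondecreasing up to the cap `K`. -/
lemma siro_tau_mono (lam mu : ℝ) (hlam : 0 < lam) (hmu : 0 < mu)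
    (K : ℕ) (hK : 1 ≤ K) (τ : ℕ → ℝ) (hτ : SIROWaitSystem lam mu K τ) :
    ∀ k ≤ K, τ k ≤ τ K := by
  obtain ⟨h0, hmid, hlast⟩ := hτ
  set E : ℕ → ℝ := fun k =>
    if k = 0 then lam * τ 1 else mu * τ k - mu * (((k : ℝ) - 1) / k) * τ (k - 1) - 1 with hE
  have e_succ : ∀ j : ℕ, E (j + 1) = mu * τ (j+1) - mu * ((j : ℝ) / ((j:ℝ)+1)) * τ j - 1 := by
    intro j
    simp only [hE, Nat.succ_ne_zero, if_false, Nat.add_sub_cancel]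
    push_cast
    ring_nf
  -- (i) the increments of τ are given by E
  have hi : ∀ k, k < K → lam * (τ (k+1) - τ k) = E k := by
    intro k hkK
    rcases k with _ | j
    · simp [hE, h0]
    · have h := hmid (j+1) (by omega) (by omega)
      rw [e_succ]
      have hcast : ((j+1 : ℕ) : ℝ) - 1 = (j : ℝ) := by push_cast; ring
      rw [show (j+1) - 1 = j from rfl, hcast] at h
      push_cast at h ⊢
      linarith
  -- (ii) terminal condition
  have hiiK : E K = 0 := by
    rcases K with _ | m
    · omega
    · rw [e_succ]
      have hcast : ((m+1 : ℕ) : ℝ) - 1 = (m : ℝ) := by push_cast; ring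
      rw [show (m+1) - 1 = m from rfl, hcast] at hlast
      push_cast at hlast ⊢
      linarith
  -- (iii) forward recursion for E
  have hiii : ∀ k, k < K →
      E (k+1) = (mu/lam) * E k + mu * τ k / ((k:ℝ)+1) - 1 := by
    intro k hkK
    have h1 : τ (k+1) = τ k + E k / lam := by
      have := hi k hkK
      field_simp
      linarith
    rw [e_succ, h1]
    have hk1 : ((k:ℝ)+1) ≠ 0 := by positivity
    field_simp
    ring
  -- Main positivity: all E m are nonnegative below K
  have hA : ∀ m, m < K → 0 ≤ E m := by
    by_contra hcon
    push_neg at hcon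
    obtain ⟨m0, hm0⟩ := hcon
    have hPex : ∃ m, m < K ∧ E m < 0 := ⟨m0, hm0.1, hm0.2⟩
    classical
    obtain ⟨m, hm1, hm2⟩ : ∃ m, (m < K ∧ E m < 0) ∧ ∀ j, j < m → ¬(j < K ∧ E j < 0) :=
      ⟨Nat.find hPex, Nat.find_spec hPex, fun j hj => Nat.find_min hPex hj⟩
    obtain ⟨hmK, hEm⟩ := hm1
    have hmin : ∀ j, j < m → 0 ≤ E j := by
      intro j hj
      by_contra hneg
      push_neg at hneg
      exact hm2 j hj ⟨by omega, hneg⟩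
    -- Step 1 : mu * τ m ≤ m
    have hτm : mu * τ m ≤ (m : ℝ) := by
      rcases m with _ | j
      · simp [h0]
      · have hEj : 0 ≤ E j := hmin j (by omega)
        have hjK : j < K := by omega
        have hrec := hiii j hjK
        have hEmlt : E (j+1) < 0 := hEm
        have htau1 : mu * τ (j + 1) = mu * τ j + (mu/lam) * E j := by
          have := hi j hjK
          field_simp
          nlinarith [this]
        have hfrac : 0 ≤ (mu/lam) * E j := by positivity
        have hj1pos : (0:ℝ) < (j:ℝ) + 1 := by positivity
        have hlt : mu * τ j / ((j:ℝ)+1) < 1 - mu/lam * E j := by linarith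
        have h2 : mu * τ j < (1 - mu/lam * E j) * ((j:ℝ)+1) := (div_lt_iff₀ hj1pos).mp hlt
        push_cast
        nlinarith [h2, htau1, hfrac, Nat.cast_nonneg (α := ℝ) j]
    -- Step 2 : negativity propagates forward, contradicting E K = 0
    have key : ∀ k, m ≤ k → (k ≤ K → E k < 0 ∧ mu * τ k ≤ (m : ℝ)) := by
      refine Nat.le_induction ?_ ?_
      · intro _; exact ⟨hEm, hτm⟩
      · intro k hmk IH hk1K
        have hkK : k < K := by omega
        obtain ⟨hEk, hτk⟩ := IH (by omega)
        have hrec := hiii k hkK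
        have hj1pos : (0:ℝ) < (k:ℝ) + 1 := by positivity
        have hdiv : mu * τ k / ((k:ℝ)+1) ≤ 1 := by
          rw [div_le_one hj1pos]
          have : (m:ℝ) ≤ (k:ℝ) + 1 := by exact_mod_cast by omega
          linarith
        have hfrac : (mu/lam) * E k < 0 :=
          mul_neg_of_pos_of_neg (by positivity) hEk
        constructor
        · rw [hrec]; linarith
        · have htau1 : mu * τ (k + 1) = mu * τ k + (mu/lam) * E k := by
            have := hi k hkK
            field_simp
            nlinarith [this]
          linarith
    exact absurd hiiK (by have := (key K (by omega) (le_refl K)).1; linarith)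
  -- conclude monotonicity
  have hstep : ∀ k, k < K → τ k ≤ τ (k+1) := by
    intro k hkK
    have h1 := hi k hkK
    have h2 := hA k hkK
    nlinarith [h1, h2]
  intro k hk
  have : ∀ j, k ≤ j → (j ≤ K → τ k ≤ τ j) := by
    refine Nat.le_induction ?_ ?_
    · intro _; exact le_refl _
    · intro j hkj IH hj1K
      exact (IH (by omega)).trans (hstep j (by omega))
  exact this K hk le_rfl

/-- Little's law for the SIRO system: `∑ k ρ^k = μ ∑ ρ^k τ k`. -/
lemma siro_little (lam mu ρ : ℝ) (hmu : 0 < mu) (hρ : mu * ρ = lam)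
    (K : ℕ) (hK : 1 ≤ K) (τ : ℕ → ℝ) (hτ : SIROWaitSystem lam mu K τ) :
    ∑ k ∈ Finset.Icc 1 K, ρ ^ k * ((k : ℝ) - mu * τ k) = 0 := by
  obtain ⟨h0, hmid, hlast⟩ := hτ
  subst hρ
  have hpart : ∀ n, n < K → ∑ k ∈ Finset.Icc 1 n, ρ ^ k * ((k : ℝ) - mu * τ k)
      = -(mu * ρ * n * ρ ^ n * (τ (n + 1) - τ n)) := by
    intro n
    induction n with
    | zero => intro _; simp
    | succ n IH =>
      intro hn1K
      rw [Finset.sum_Icc_succ_top (by omega : 1 ≤ n + 1), IH (by omega)]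
      have hne : ((n : ℝ) + 1) ≠ 0 := by positivity
      have h := hmid (n + 1) (by omega) (by omega)
      rw [show (n + 1) - 1 = n from rfl] at h
      push_cast at h
      have h3 : mu * (n : ℝ) * τ n / ((n : ℝ) + 1)
          = (mu + mu * ρ) * τ (n + 1) - mu * ρ * τ (n + 2) - 1 := by
        linear_combination -h
      have h2 : mu * (n : ℝ) * τ n
          = ((mu + mu * ρ) * τ (n + 1) - mu * ρ * τ (n + 2) - 1) * ((n : ℝ) + 1) :=
        (div_eq_iff hne).mp h3
      push_cast
      linear_combination (ρ ^ (n + 1)) * h2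
  obtain ⟨m, rfl⟩ : ∃ m, K = m + 1 := ⟨K - 1, by omega⟩
  rw [Finset.sum_Icc_succ_top (by omega : 1 ≤ m + 1), hpart m (by omega)]
  have hne : ((m : ℝ) + 1) ≠ 0 := by positivity
  rw [show (m + 1) - 1 = m from rfl] at hlast
  push_cast at hlast
  have h3 : mu * (m : ℝ) * τ m / ((m : ℝ) + 1) = mu * τ (m + 1) - 1 := by
    linear_combination -hlast
  have h2 : mu * (m : ℝ) * τ m = (mu * τ (m + 1) - 1) * ((m : ℝ) + 1) :=
    (div_eq_iff hne).mp h3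
  push_cast
  linear_combination (ρ ^ (m + 1)) * h2

/-- **Buyers' participation constraint holds under SIRO.** With `ρ = λ/μ`, for any solution `τ`
of the SIRO waiting-time system with cap `K ≥ 1`, if `v ≥ c τ K` then the aggregate steady-state
buyer surplus `∑_{k=1}^K ρ^k (μ v − c k)` is nonnegative. -/
theorem siro_participation_constraint (lam mu v c : ℝ)
    (hlam : 0 < lam) (hmu : 0 < mu) (hv : 0 < v) (hc : 0 < c)
    (K : ℕ) (hK : 1 ≤ K)
    (τ : ℕ → ℝ) (hτ : SIROWaitSystem lam mu K τ)
    (hjoin : c * τ K ≤ v) :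
    let ρ := lam / mu
    0 ≤ ∑ k ∈ Finset.Icc 1 K, ρ ^ k * (mu * v - c * k) := by
  show 0 ≤ ∑ k ∈ Finset.Icc 1 K, (lam / mu) ^ k * (mu * v - c * k)
  set ρ : ℝ := lam / mu with hρdef
  have hρ : mu * ρ = lam := by rw [hρdef]; field_simp
  have hρ0 : 0 ≤ ρ := by positivity
  have hlittle := siro_little lam mu ρ hmu hρ K hK τ hτ
  have hmono := siro_tau_mono lam mu hlam hmu K hK τ hτ
  have hsplit : ∀ k ∈ Finset.Icc 1 K,
      ρ ^ k * (mu * v - c * k)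
        = mu * ρ ^ k * (v - c * τ k) - c * (ρ ^ k * ((k : ℝ) - mu * τ k)) := by
    intro k _; ring
  rw [Finset.sum_congr rfl hsplit, Finset.sum_sub_distrib, ← Finset.mul_sum, hlittle,
    mul_zero, sub_zero]
  apply Finset.sum_nonneg
  intro k hk
  have hk' : k ≤ K := (Finset.mem_Icc.mp hk).2
  have h1 : c * τ k ≤ c * τ K := mul_le_mul_of_nonneg_left (hmono k hk') hc.le
  have h2 : 0 ≤ v - c * τ k := by linarith
  exact mul_nonneg (mul_nonneg hmu.le (pow_nonneg hρ0 k)) h2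
end

section
/- Let F : [0,1] → [0,1] be a continuously differentiable CDF with F(0) = 0, F(1) = 1 and density f = F' strictly positive on (0,1). Let ρ > 1, c > 0, and let ṽ ∈ (0,1) satisfy ρ (1 − F(ṽ)) = 1. Define X*(v) := 1_{[ṽ,1]}(v), W*(v) := (ṽ/c) · 1_{[ṽ,1]}(v), and U(v) := v X*(v) − c W*(v). Then: (i) U(v) ≥ 0 for all v ∈ [0,1] (individual rationality); (ii) U(v) ≥ v X*(v') − c W*(v') for all v, v' ∈ [0,1] (incentive compatibility); and (iii) ρ · ∫₀¹ X*(v) f(v) dv = 1 and ∫₀¹ v X*(v) f(v) dv = ∫_{ṽ}^1 v f(v) dv. -/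
open intervalIntegral

/-- **The allocatively efficient cutoff mechanism is IC, IR, and market-clearing** in the fluid
NTU model. Let `F` be a continuously differentiable CDF on `[0,1]` with density `f = F'` strictly
positive on `(0,1)`, `ρ > 1`, `c > 0`, and let `ṽ ∈ (0,1)` satisfy `ρ (1 − F ṽ) = 1`. Define
`X*(v) = 1_{[ṽ,1]}(v)`, `W*(v) = (ṽ/c) 1_{[ṽ,1]}(v)`, and `U(v) = v X*(v) − c W*(v)`. Then
(i) `U ≥ 0` on `[0,1]`; (ii) `U(v) ≥ v X*(v') − c W*(v')` for all `v, v' ∈ [0,1]`; and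
(iii) `ρ ∫₀¹ X* f = 1` and `∫₀¹ v X*(v) f(v) dv = ∫_ṽ¹ v f(v) dv`. -/
theorem cutoff_mechanism_ic_ir_market_clearing
    (F f : ℝ → ℝ)
    (hF : ∀ x ∈ Set.Icc (0:ℝ) 1, HasDerivAt F (f x) x)
    (hfcont : ContinuousOn f (Set.Icc 0 1))
    (hfpos : ∀ x ∈ Set.Ioo (0:ℝ) 1, 0 < f x)
    (hF0 : F 0 = 0) (hF1 : F 1 = 1)
    (ρ c : ℝ) (hρ : 1 < ρ) (hc : 0 < c)
    (vt : ℝ) (hvt : vt ∈ Set.Ioo (0:ℝ) 1) (hclear : ρ * (1 - F vt) = 1)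
    (Xstar Wstar U : ℝ → ℝ)
    (hX : ∀ v, Xstar v = (Set.Icc vt 1).indicator (fun _ => (1:ℝ)) v)
    (hW : ∀ v, Wstar v = (vt / c) * (Set.Icc vt 1).indicator (fun _ => (1:ℝ)) v)
    (hU : ∀ v, U v = v * Xstar v - c * Wstar v) :
    (∀ v ∈ Set.Icc (0:ℝ) 1, 0 ≤ U v) ∧
    (∀ v ∈ Set.Icc (0:ℝ) 1, ∀ v' ∈ Set.Icc (0:ℝ) 1,
      v * Xstar v' - c * Wstar v' ≤ U v) ∧
    ρ * (∫ v in (0:ℝ)..1, Xstar v * f v) = 1 ∧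
    (∫ v in (0:ℝ)..1, v * Xstar v * f v) = ∫ v in vt..1, v * f v := by
  obtain ⟨hvt0, hvt1⟩ := hvt
  have hcne : c ≠ 0 := ne_of_gt hc
  have hUval : ∀ v, U v = (v - vt) * (Set.Icc vt 1).indicator (fun _ => (1:ℝ)) v := by
    intro v
    rw [hU, hX, hW]
    field_simp
  have hpay : ∀ v v', v * Xstar v' - c * Wstar v'
      = (v - vt) * (Set.Icc vt 1).indicator (fun _ => (1:ℝ)) v' := by
    intro v v'
    rw [hX, hW]
    field_simp
  have hIR : ∀ v ∈ Set.Icc (0:ℝ) 1, 0 ≤ U v := by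
    intro v hv
    rw [hUval]
    by_cases h : v ∈ Set.Icc vt 1
    · simp [Set.indicator_of_mem h]
      linarith [h.1]
    · simp [Set.indicator_of_notMem h]
  refine ⟨hIR, ?_, ?_, ?_⟩
  · intro v hv v' hv'
    rw [hpay, hUval]
    by_cases h' : v' ∈ Set.Icc vt 1
    · rw [Set.indicator_of_mem h']
      by_cases h : v ∈ Set.Icc vt 1
      · rw [Set.indicator_of_mem h]
      · rw [Set.indicator_of_notMem h]
        have : v < vt := by
          by_contra hh
          exact h ⟨le_of_not_gt hh, hv.2⟩
        nlinarith
    · rw [Set.indicator_of_notMem h']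
      have := hIR v hv
      rw [hUval] at this
      simpa using this
  all_goals {
    have hsub : Set.Icc vt 1 ⊆ Set.Icc (0:ℝ) 1 := Set.Icc_subset_Icc (le_of_lt hvt0) le_rfl
    have husub : Set.uIcc vt 1 ⊆ Set.Icc (0:ℝ) 1 := by
      rw [Set.uIcc_of_le (le_of_lt hvt1)]; exact hsub
    have hint : IntervalIntegrable f MeasureTheory.volume vt 1 :=
      (hfcont.mono hsub).intervalIntegrable_of_Icc (le_of_lt hvt1)
    first
    | · -- market clearing
        have key : (∫ v in (0:ℝ)..1, Xstar v * f v) = ∫ v in vt..1, f v := by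
          have h1 : ∀ v, Xstar v * f v = (Set.Icc vt 1).indicator f v := by
            intro v
            rw [hX]
            by_cases h : v ∈ Set.Icc vt 1
            · simp [Set.indicator_of_mem h]
            · simp [Set.indicator_of_notMem h]
          simp_rw [h1]
          rw [intervalIntegral.integral_of_le (by norm_num : (0:ℝ) ≤ 1),
            MeasureTheory.setIntegral_indicator measurableSet_Icc]
          have : Set.Ioc (0:ℝ) 1 ∩ Set.Icc vt 1 = Set.Icc vt 1 := by
            ext x
            constructor
            · exact fun h => h.2
            · exact fun h => ⟨⟨lt_of_lt_of_le hvt0 h.1, h.2⟩, h⟩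
          rw [this, MeasureTheory.integral_Icc_eq_integral_Ioc,
            ← intervalIntegral.integral_of_le (le_of_lt hvt1)]
        have hFTC : (∫ v in vt..1, f v) = F 1 - F vt := by
          apply intervalIntegral.integral_eq_sub_of_hasDerivAt
          · intro x hx
            exact hF x (husub hx)
          · exact hint
        rw [key, hFTC, hF1]
        linarith [hclear]
    | · -- surplus
        have h1 : ∀ v, v * Xstar v * f v = (Set.Icc vt 1).indicator (fun w => w * f w) v := by
          intro v
          rw [hX]
          by_cases h : v ∈ Set.Icc vt 1
          · simp [Set.indicator_of_mem h]
          · simp [Set.indicator_of_notMem h]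
        simp_rw [h1]
        rw [intervalIntegral.integral_of_le (by norm_num : (0:ℝ) ≤ 1),
          MeasureTheory.setIntegral_indicator measurableSet_Icc]
        have : Set.Ioc (0:ℝ) 1 ∩ Set.Icc vt 1 = Set.Icc vt 1 := by
          ext x
          constructor
          · exact fun h => h.2
          · exact fun h => ⟨⟨lt_of_lt_of_le hvt0 h.1, h.2⟩, h⟩
        rw [this, MeasureTheory.integral_Icc_eq_integral_Ioc,
          ← intervalIntegral.integral_of_le (le_of_lt hvt1)]
  }
end

section
/- Let K ≥ 2 be an integer, μ > 0, ρ > 0. Suppose r_2, ..., r_K : [0,∞) → ℝ are differentiable functions with r_ℓ(0) = ρ for each ℓ, satisfying the ODE system r_ℓ'(t) = μ · r_ℓ(t) · (r_{ℓ+1}(t) − r_ℓ(t)) for ℓ = 2, ..., K and all t ≥ 0, with the convention r_{K+1} ≡ 0. Then r_ℓ'(t) ≤ 0 for every ℓ = 2, ..., K and every t ≥ 0; in particular r_ℓ(t) ≤ ρ for all t ≥ 0. -/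
open Set Real Filter Topology

/-- A solution of `u' = μ u (v - u)` with `u 0 > 0` stays positive for `t ≥ 0`. -/
lemma aux_pos_fcfs (mu : ℝ) (u v : ℝ → ℝ)
    (h0 : 0 < u 0)
    (hv : ContinuousOn v (Ici 0))
    (hodeu : ∀ t : ℝ, 0 ≤ t → HasDerivAt u (mu * u t * (v t - u t)) t) :
    ∀ t : ℝ, 0 ≤ t → 0 < u t := by
  intro t1 ht1
  by_contra hle
  push_neg at hle
  have hucont : ContinuousOn u (Ici 0) :=
    fun x hx => (hodeu x hx).continuousAt.continuousWithinAt
  -- find a zero t0 ∈ [0, t1]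
  have hmem : (0 : ℝ) ∈ Icc (u t1) (u 0) := ⟨hle, le_of_lt h0⟩
  obtain ⟨t0, ht0mem, ht0⟩ :=
    intermediate_value_Icc' ht1 (hucont.mono Icc_subset_Ici_self) hmem
  have ht0nonneg : 0 ≤ t0 := ht0mem.1
  -- bound the coefficient on [0, t0]
  obtain ⟨C, hC⟩ := (isCompact_Icc (a := (0:ℝ)) (b := t0)).exists_bound_of_continuousOn
    (f := fun x => mu * (v x - u x))
    ((continuousOn_const.mul (hv.sub hucont)).mono Icc_subset_Ici_self)
  -- time-reversed function
  set w : ℝ → ℝ := fun s => u (t0 - s) with hw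
  have key : ∀ x ∈ Icc (0:ℝ) t0, ‖w x‖ ≤ gronwallBound 0 C 0 (x - 0) := by
    apply norm_le_gronwallBound_of_norm_deriv_right_le
      (f' := fun s => mu * u (t0 - s) * (v (t0 - s) - u (t0 - s)) * (-1))
    · intro x hx
      have hsub : t0 - x ∈ Ici (0:ℝ) := by
        simp only [mem_Ici, sub_nonneg]; exact hx.2
      have hinner : ContinuousWithinAt (fun s : ℝ => t0 - s) (Icc 0 t0) x :=
        (continuousOn_const.sub continuousOn_id) x hx
      exact (hucont (t0 - x) hsub).comp hinner (fun y hy => by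
        simp only [mem_Ici, mem_preimage, sub_nonneg]
        exact hy.2)
    · intro x hx
      have hsub : (0:ℝ) ≤ t0 - x := sub_nonneg.2 (le_of_lt hx.2)
      have hinner : HasDerivAt (fun s : ℝ => t0 - s) (-1) x := by
        simpa using (hasDerivAt_id x).const_sub t0
      exact ((hodeu (t0 - x) hsub).comp x hinner).hasDerivWithinAt
    · simp [hw, ht0]
    · intro x hx
      have hsub : t0 - x ∈ Icc (0:ℝ) t0 := ⟨sub_nonneg.2 (le_of_lt hx.2),
        by linarith [hx.1]⟩
      have hb := hC (t0 - x) hsub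
      have heq : ‖mu * u (t0 - x) * (v (t0 - x) - u (t0 - x)) * (-1)‖
          = ‖mu * (v (t0 - x) - u (t0 - x))‖ * ‖u (t0 - x)‖ := by
        simp only [norm_mul, norm_neg, norm_one, mul_one, Real.norm_eq_abs, ← abs_mul]
        ring_nf
      rw [heq]
      have hle2 : ‖mu * (v (t0 - x) - u (t0 - x))‖ * ‖u (t0 - x)‖ ≤ C * ‖u (t0 - x)‖ :=
        mul_le_mul_of_nonneg_right hb (norm_nonneg _)
      calc ‖mu * (v (t0 - x) - u (t0 - x))‖ * ‖u (t0 - x)‖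
          ≤ C * ‖u (t0 - x)‖ := hle2
        _ = C * ‖w x‖ + 0 := by simp [hw]
  have hkey := key t0 ⟨ht0nonneg, le_refl _⟩
  rw [gronwallBound_ε0_δ0] at hkey
  have hu0 : ‖u 0‖ ≤ 0 := by simpa [hw] using hkey
  have : u 0 = 0 := norm_eq_zero.1 (le_antisymm hu0 (norm_nonneg _))
  rw [this] at h0
  exact lt_irrefl 0 h0

/-- Comparison: if `u' = μ u (v - u)`, `v' = μ v (w - v)`, `v 0 ≤ u 0`, `v ≥ 0` and
`w ≤ v`, then `v ≤ u` on `[0, ∞)`. -/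
lemma aux_order_fcfs (mu : ℝ) (hmu : 0 ≤ mu) (u v w : ℝ → ℝ)
    (h0 : v 0 ≤ u 0)
    (hodeu : ∀ t : ℝ, 0 ≤ t → HasDerivAt u (mu * u t * (v t - u t)) t)
    (hodev : ∀ t : ℝ, 0 ≤ t → HasDerivAt v (mu * v t * (w t - v t)) t)
    (hvpos : ∀ t : ℝ, 0 ≤ t → 0 ≤ v t)
    (hwv : ∀ t : ℝ, 0 ≤ t → w t ≤ v t) :
    ∀ t : ℝ, 0 ≤ t → v t ≤ u t := by
  intro t1 ht1
  by_contra hlt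
  push_neg at hlt
  have hucont : ContinuousOn u (Ici 0) :=
    fun x hx => (hodeu x hx).continuousAt.continuousWithinAt
  have hvcont : ContinuousOn v (Ici 0) :=
    fun x hx => (hodev x hx).continuousAt.continuousWithinAt
  set g : ℝ → ℝ := fun t => u t - v t with hg
  have hgcont : ContinuousOn g (Ici 0) := hucont.sub hvcont
  have hgt1 : g t1 < 0 := sub_neg.2 hlt
  -- the last time g is nonnegative
  set A : Set ℝ := Icc 0 t1 ∩ g ⁻¹' (Ici 0) with hA
  have hAclosed : IsClosed A :=
    (hgcont.mono Icc_subset_Ici_self).preimage_isClosed_of_isClosed isClosed_Icc isClosed_Ici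
  have hAcompact : IsCompact A :=
    isCompact_Icc.of_isClosed_subset hAclosed inter_subset_left
  have hAne : A.Nonempty := ⟨0, ⟨le_refl _, ht1⟩, by
    simp only [mem_preimage, mem_Ici, hg]; linarith⟩
  set t0 : ℝ := sSup A with ht0def
  have ht0A : t0 ∈ A := hAcompact.sSup_mem hAne
  have ht0mem : t0 ∈ Icc 0 t1 := ht0A.1
  have hgt0 : 0 ≤ g t0 := ht0A.2
  have ht0ne : t0 ≠ t1 := by
    intro h; rw [h] at hgt0; linarith
  have ht0lt : t0 < t1 := lt_of_le_of_ne ht0mem.2 ht0ne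
  have hneg : ∀ s : ℝ, t0 < s → s ≤ t1 → g s < 0 := by
    intro s hs hs1
    by_contra hge
    push_neg at hge
    have hsA : s ∈ A := ⟨⟨le_trans ht0mem.1 (le_of_lt hs), hs1⟩, hge⟩
    exact absurd (le_csSup hAcompact.bddAbove hsA) (not_le.2 hs)
  have hgt0z : g t0 = 0 := by
    refine le_antisymm ?_ hgt0
    have hgat : ContinuousAt g t0 :=
      ((hodeu t0 ht0mem.1).continuousAt.sub (hodev t0 ht0mem.1).continuousAt)
    have htend : Tendsto g (𝓝[>] t0) (𝓝 (g t0)) :=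
      hgat.tendsto.mono_left nhdsWithin_le_nhds
    refine le_of_tendsto htend ?_
    filter_upwards [Ioo_mem_nhdsGT_of_mem ⟨le_refl t0, ht0lt⟩] with s hs
    exact le_of_lt (hneg s hs.1 (le_of_lt hs.2))
  -- bound on the coefficient
  obtain ⟨C, hC⟩ := (isCompact_Icc (a := (0:ℝ)) (b := t1)).exists_bound_of_continuousOn
    (f := fun x => mu * u x)
    ((continuousOn_const.mul hucont).mono Icc_subset_Ici_self)
  -- Gronwall on φ = v - u on [t0, t1]
  set φ : ℝ → ℝ := fun t => v t - u t with hφ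
  have key : ∀ x ∈ Icc t0 t1, φ x ≤ gronwallBound 0 C 0 (x - t0) := by
    apply le_gronwallBound_of_liminf_deriv_right_le
      (f' := fun x => mu * v x * (w x - v x) - mu * u x * (v x - u x))
    · exact (hvcont.sub hucont).mono (fun x hx => le_trans ht0mem.1 hx.1)
    · intro x hx r hr
      have hx0 : (0:ℝ) ≤ x := le_trans ht0mem.1 hx.1
      exact (((hodev x hx0).sub (hodeu x hx0)).hasDerivWithinAt).liminf_right_slope_le hr
    · have : φ t0 = -(g t0) := by simp [hφ, hg]
      rw [this, hgt0z]; norm_num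
    · intro x hx
      have hx0 : (0:ℝ) ≤ x := le_trans ht0mem.1 hx.1
      have hφnn : 0 ≤ φ x := by
        rcases eq_or_lt_of_le hx.1 with h | h
        · have : φ x = -(g x) := by simp [hφ, hg]
          rw [this, ← h, hgt0z]; norm_num
        · have := hneg x h (le_of_lt hx.2)
          simp only [hφ, hg] at this ⊢
          linarith
      have h1 : mu * v x * (w x - v x) ≤ 0 :=
        mul_nonpos_of_nonneg_of_nonpos (mul_nonneg hmu (hvpos x hx0))
          (by linarith [hwv x hx0])
      have h2 : -(mu * u x) ≤ C := by
        have := hC x ⟨hx0, le_of_lt (lt_of_lt_of_le hx.2 (le_refl t1))⟩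
        have habs : |mu * u x| ≤ C := this
        linarith [neg_abs_le (mu * u x)]
      have h3 : -(mu * u x) * φ x ≤ C * φ x :=
        mul_le_mul_of_nonneg_right h2 hφnn
      have h4 : mu * u x * (v x - u x) = (mu * u x) * φ x := by
        simp only [hφ]
      calc mu * v x * (w x - v x) - mu * u x * (v x - u x)
          ≤ -(mu * u x) * φ x := by rw [h4]; linarith
        _ ≤ C * φ x := h3
        _ = C * φ x + 0 := by ring
  have hkey := key t1 ⟨le_of_lt ht0lt, le_refl _⟩
  rw [gronwallBound_ε0_δ0] at hkey
  have : φ t1 > 0 := by simp only [hφ]; linarith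
  linarith

/-- **Likelihood ratios fall over time under FCFS with coarse information.** Let `K ≥ 2`,
`μ > 0`, `ρ > 0`, and let `r ℓ` for `ℓ = 2, ..., K` be differentiable likelihood-ratio paths
with `r ℓ 0 = ρ`, satisfying (with the convention `r (K+1) ≡ 0`) the ODE system
`(r ℓ)'(t) = μ r ℓ t (r (ℓ+1) t − r ℓ t)` for all `t ≥ 0`. Then `(r ℓ)'(t) ≤ 0` for every
`ℓ = 2, ..., K` and every `t ≥ 0`; in particular `r ℓ t ≤ ρ` for all `t ≥ 0`. -/
theorem likelihood_ratios_nonincreasing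
    (K : ℕ) (hK : 2 ≤ K) (mu ρ : ℝ) (hmu : 0 < mu) (hρ : 0 < ρ)
    (r : ℕ → ℝ → ℝ)
    (hinit : ∀ ℓ : ℕ, 2 ≤ ℓ → ℓ ≤ K → r ℓ 0 = ρ)
    (htop : ∀ t : ℝ, r (K + 1) t = 0)
    (hode : ∀ ℓ : ℕ, 2 ≤ ℓ → ℓ ≤ K → ∀ t : ℝ, 0 ≤ t →
      HasDerivAt (r ℓ) (mu * r ℓ t * (r (ℓ + 1) t - r ℓ t)) t) :
    ∀ ℓ : ℕ, 2 ≤ ℓ → ℓ ≤ K → ∀ t : ℝ, 0 ≤ t →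
      deriv (r ℓ) t ≤ 0 ∧ r ℓ t ≤ ρ := by
  -- continuity of successors
  have hcont : ∀ ℓ : ℕ, 2 ≤ ℓ → ℓ ≤ K → ContinuousOn (r (ℓ + 1)) (Ici 0) := by
    intro ℓ h2 hℓ
    rcases eq_or_lt_of_le hℓ with h | h
    · rw [h]
      exact (continuousOn_congr (fun t _ => htop t)).2 continuousOn_const
    · exact fun x hx => (hode (ℓ + 1) (by omega) (by omega) x hx).continuousAt.continuousWithinAt
  -- positivity
  have hpos : ∀ ℓ : ℕ, 2 ≤ ℓ → ℓ ≤ K → ∀ t : ℝ, 0 ≤ t → 0 < r ℓ t := by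
    intro ℓ h2 hℓ
    exact aux_pos_fcfs mu (r ℓ) (r (ℓ + 1))
      (by rw [hinit ℓ h2 hℓ]; exact hρ) (hcont ℓ h2 hℓ) (hode ℓ h2 hℓ)
  -- ordering, by downward induction
  have horder : ∀ n ℓ : ℕ, ℓ + n = K → 2 ≤ ℓ → ∀ t : ℝ, 0 ≤ t → r (ℓ + 1) t ≤ r ℓ t := by
    intro n
    induction n with
    | zero =>
      intro ℓ hℓ h2 t ht
      have : ℓ = K := by omega
      rw [this, htop t]
      exact le_of_lt (hpos K hK (le_refl K) t ht)
    | succ n ih =>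
      intro ℓ hℓ h2 t ht
      have hℓK : ℓ ≤ K := by omega
      have hℓ1K : ℓ + 1 ≤ K := by omega
      refine aux_order_fcfs mu (le_of_lt hmu) (r ℓ) (r (ℓ + 1)) (r (ℓ + 2))
        ?_ (hode ℓ h2 hℓK) ?_ ?_ ?_ t ht
      · rw [hinit ℓ h2 hℓK, hinit (ℓ + 1) (by omega) hℓ1K]
      · exact hode (ℓ + 1) (by omega) hℓ1K
      · intro s hs; exact le_of_lt (hpos (ℓ + 1) (by omega) hℓ1K s hs)
      · intro s hs
        have := ih (ℓ + 1) (by omega) (by omega) s hs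
        simpa using this
  have horder' : ∀ ℓ : ℕ, 2 ≤ ℓ → ℓ ≤ K → ∀ t : ℝ, 0 ≤ t → r (ℓ + 1) t ≤ r ℓ t := by
    intro ℓ h2 hℓ
    exact horder (K - ℓ) ℓ (by omega) h2
  intro ℓ h2 hℓ t ht
  have hderiv : ∀ s : ℝ, 0 ≤ s → deriv (r ℓ) s ≤ 0 := by
    intro s hs
    rw [(hode ℓ h2 hℓ s hs).deriv]
    exact mul_nonpos_of_nonneg_of_nonpos
      (mul_nonneg (le_of_lt hmu) (le_of_lt (hpos ℓ h2 hℓ s hs)))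
      (by linarith [horder' ℓ h2 hℓ s hs])
  constructor
  · exact hderiv t ht
  · have hanti : AntitoneOn (r ℓ) (Ici 0) := by
      apply antitoneOn_of_deriv_nonpos (convex_Ici 0)
      · exact fun x hx => (hode ℓ h2 hℓ x hx).continuousAt.continuousWithinAt
      · intro x hx
        rw [interior_Ici] at hx
        exact ((hode ℓ h2 hℓ x (le_of_lt hx)).differentiableAt).differentiableWithinAt
      · intro x hx
        rw [interior_Ici] at hx
        exact hderiv x (le_of_lt hx)
    have := hanti (self_mem_Ici) ht ht
    rwa [hinit ℓ h2 hℓ] at this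
end

section
/- Let n ≥ 1, let a, d ∈ ℝⁿ with a_1 ≤ a_2 ≤ ... ≤ a_n and d_1 ≤ d_2 ≤ ... ≤ d_n, let σ be a permutation of {1, ..., n}, and let φ : ℝ → ℝ be convex. Then Σ_{i=1}^n φ(d_i − a_i) ≤ Σ_{i=1}^n φ(d_{σ(i)} − a_i). -/
open Finset

/-- Key convexity lemma: if `p ≤ x ≤ q` and `x + y = p + q`, then
`φ x + φ y ≤ φ p + φ q` for convex `φ`. -/
lemma convex_swap_key {φ : ℝ → ℝ} (hφ : ConvexOn ℝ Set.univ φ)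
    {p q x y : ℝ} (hpx : p ≤ x) (hxq : x ≤ q) (hsum : x + y = p + q) :
    φ x + φ y ≤ φ p + φ q := by
  rcases eq_or_lt_of_le (hpx.trans hxq) with h | h
  · have hx : x = p := le_antisymm (h ▸ hxq) hpx
    have hy : y = q := by linarith
    rw [hx, hy]
  · have hqp : 0 < q - p := by linarith
    set t := (x - p) / (q - p) with ht
    have ht0 : 0 ≤ t := div_nonneg (by linarith) (by linarith)
    have ht1 : t ≤ 1 := by
      rw [ht, div_le_one hqp]; linarith
    have hx : x = (1 - t) * p + t * q := by
      have e : t * (q - p) = x - p := by rw [ht]; exact div_mul_cancel₀ _ hqp.ne'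
      linarith
    have hy : y = t * p + (1 - t) * q := by
      have : t * (q - p) = x - p := by rw [ht]; exact div_mul_cancel₀ _ hqp.ne'
      nlinarith [this]
    have h1 : φ ((1 - t) • p + t • q) ≤ (1 - t) • φ p + t • φ q :=
      hφ.2 (Set.mem_univ p) (Set.mem_univ q) (by linarith) ht0 (by ring)
    have h2 : φ (t • p + (1 - t) • q) ≤ t • φ p + (1 - t) • φ q :=
      hφ.2 (Set.mem_univ p) (Set.mem_univ q) ht0 (by linarith) (by ring)
    simp only [smul_eq_mul] at h1 h2
    rw [hx, hy]
    nlinarith [h1, h2]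

/-- **FCFS waiting times are a mean-preserving contraction of those under any other
discipline.** Let `a 1 ≤ ... ≤ a n` be arrival times, `d 1 ≤ ... ≤ d n` departure times within
a busy cycle, `σ` a permutation (the matching of departures to arrivals induced by a queueing
discipline, the identity being FCFS), and `φ` convex. Then
`∑ i, φ (d i − a i) ≤ ∑ i, φ (d (σ i) − a i)`. -/
theorem fcfs_waiting_times_majorized
    (n : ℕ) (hn : 1 ≤ n) (a d : Fin n → ℝ)
    (ha : Monotone a) (hd : Monotone d)
    (σ : Equiv.Perm (Fin n)) (φ : ℝ → ℝ) (hφ : ConvexOn ℝ Set.univ φ) :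
    ∑ i, φ (d i - a i) ≤ ∑ i, φ (d (σ i) - a i) := by
  suffices H : ∀ m (σ : Equiv.Perm (Fin n)),
      (Finset.univ.filter (fun i : Fin n => ∃ k, i ≤ k ∧ σ k ≠ k)).card ≤ m →
      ∑ i, φ (d i - a i) ≤ ∑ i, φ (d (σ i) - a i) from H _ σ le_rfl
  intro m
  induction m with
  | zero =>
    intro σ hσ
    have hfix : ∀ i, σ i = i := by
      intro i
      by_contra h
      have hmem : i ∈ Finset.univ.filter (fun i : Fin n => ∃ k, i ≤ k ∧ σ k ≠ k) :=
        Finset.mem_filter.2 ⟨Finset.mem_univ _, ⟨i, le_rfl, h⟩⟩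
      have := Finset.card_pos.2 ⟨i, hmem⟩
      omega
    simp [hfix]
  | succ m ih =>
    intro σ hσ
    by_cases h1 : ∀ i, σ i = i
    · simp [h1]
    push_neg at h1
    set s : Finset (Fin n) := Finset.univ.filter (fun i : Fin n => σ i ≠ i) with hs
    have hsne : s.Nonempty := by
      obtain ⟨i, hi⟩ := h1; exact ⟨i, by simp [hs, hi]⟩
    set j := s.max' hsne with hj
    have hjmem : σ j ≠ j := by
      have := s.max'_mem hsne; simpa [hs] using this
    have hfix_gt : ∀ i, j < i → σ i = i := by
      intro i hi
      by_contra h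
      exact absurd (s.le_max' i (by simp [hs, h])) (not_le.2 hi)
    have hσj_lt : σ j < j := by
      rcases lt_trichotomy (σ j) j with h | h | h
      · exact h
      · exact absurd h hjmem
      · exact absurd (σ.injective (hfix_gt _ h)) hjmem
    set k := σ.symm j with hk
    have hσk : σ k = j := σ.apply_symm_apply j
    have hkj : k ≠ j := by
      intro h; rw [h] at hσk; exact hjmem hσk
    have hk_lt : k < j := by
      rcases lt_or_gt_of_ne hkj with h | h
      · exact h
      · exact absurd ((hfix_gt k h) ▸ hσk) (ne_of_gt h)
    set σ' := σ * Equiv.swap k j with hσ'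
    have hσ'j : σ' j = j := by
      simp [hσ', Equiv.swap_apply_right, hσk]
    have hσ'k : σ' k = σ j := by
      simp [hσ', Equiv.swap_apply_left]
    have hσ'other : ∀ i, i ≠ k → i ≠ j → σ' i = σ i := by
      intro i hik hij
      simp [hσ', Equiv.swap_apply_of_ne_of_ne hik hij]
    -- measure decreases
    have hmeas : (Finset.univ.filter (fun i : Fin n => ∃ k, i ≤ k ∧ σ' k ≠ k)).card ≤ m := by
      have hss : Finset.univ.filter (fun i : Fin n => ∃ k, i ≤ k ∧ σ' k ≠ k) ⊂
          Finset.univ.filter (fun i : Fin n => ∃ k, i ≤ k ∧ σ k ≠ k) := by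
        constructor
        · intro i hi
          simp only [Finset.mem_filter, Finset.mem_univ, true_and] at hi ⊢
          obtain ⟨k', hik', hk'⟩ := hi
          have hk'j : k' < j := by
            rcases lt_trichotomy k' j with h | h | h
            · exact h
            · exact absurd (h ▸ hσ'j) hk'
            · have : σ' k' = σ k' := hσ'other k' (ne_of_gt (hk_lt.trans h)) (ne_of_gt h)
              exact absurd (this.trans (hfix_gt k' h)) hk'
          exact ⟨j, le_of_lt (lt_of_le_of_lt hik' hk'j), hjmem⟩
        · intro hsub
          have hjin : j ∈ Finset.univ.filter (fun i : Fin n => ∃ k, i ≤ k ∧ σ k ≠ k) :=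
            Finset.mem_filter.2 ⟨Finset.mem_univ _, ⟨j, le_rfl, hjmem⟩⟩
          have hjin' := hsub hjin
          simp only [Finset.mem_filter, Finset.mem_univ, true_and] at hjin'
          obtain ⟨k', hjk', hk'⟩ := hjin'
          rcases eq_or_lt_of_le hjk' with h | h
          · exact hk' (h ▸ hσ'j)
          · exact hk' ((hσ'other k' (ne_of_gt (hk_lt.trans h)) (ne_of_gt h)).trans
              (hfix_gt k' h))
      have := Finset.card_lt_card hss
      omega
    -- sum comparison: ∑ f' ≤ ∑ f
    have hsum_le : ∑ i, φ (d (σ' i) - a i) ≤ ∑ i, φ (d (σ i) - a i) := by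
      have hjk' : k ∈ (Finset.univ : Finset (Fin n)).erase j :=
        Finset.mem_erase.2 ⟨hkj, Finset.mem_univ _⟩
      have decomp : ∀ f : Fin n → ℝ,
          ∑ i, f i = (∑ i ∈ (Finset.univ.erase j).erase k, f i) + f k + f j := by
        intro f
        rw [Finset.sum_erase_add _ _ hjk', Finset.sum_erase_add _ _ (Finset.mem_univ j)]
      rw [decomp (fun i => φ (d (σ' i) - a i)), decomp (fun i => φ (d (σ i) - a i))]
      have heq : ∑ i ∈ (Finset.univ.erase j).erase k, φ (d (σ' i) - a i)
          = ∑ i ∈ (Finset.univ.erase j).erase k, φ (d (σ i) - a i) := by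
        apply Finset.sum_congr rfl
        intro i hi
        simp only [Finset.mem_erase] at hi
        rw [hσ'other i hi.1 hi.2.1]
      rw [heq]
      have hkey : φ (d (σ' k) - a k) + φ (d (σ' j) - a j)
          ≤ φ (d (σ k) - a k) + φ (d (σ j) - a j) := by
        rw [hσ'k, hσ'j, hσk]
        -- φ (d (σ j) - a k) + φ (d j - a j) ≤ φ (d j - a k) + φ (d (σ j) - a j)
        have hax : a k ≤ a j := ha (le_of_lt hk_lt)
        have hdx : d (σ j) ≤ d j := hd (le_of_lt hσj_lt)
        have := convex_swap_key hφ (p := d (σ j) - a j) (q := d j - a k)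
          (x := d (σ j) - a k) (y := d j - a j) (by linarith) (by linarith) (by ring)
        linarith [this]
      linarith [hkey]
    exact le_trans (ih σ' hmeas) hsum_le
end
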